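/- arXiv:math/0605571 — 3 statements merged into one kernel-verified Lean document; each statement's English description precedes it below -/
import Mathlib

section
/- Let 𝔻 be a connected oriented ribbon graph. Then every exponent d of A occurring with nonzero coefficient in ⟨𝔻⟩ satisfies d ≤ e(𝔻) + 2v(𝔻) − 2. If moreover no edge of 𝔻 is a loop, then the coefficient of A^{e(𝔻) + 2v(𝔻) − 2} in ⟨𝔻⟩ is nonzero, so the maximal exponent of ⟨𝔻⟩ equals e(𝔻) + 2v(𝔻) − 2. -/
open Equiv Finset

/-- The number of orbits, i.e. classes of the equivalence relation generated by `r`. -/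
noncomputable def orbCount {α : Type*} (r : α → α → Prop) : ℕ := Nat.card (Quot r)

variable {B : Type} [Fintype B] [DecidableEq B]

/-- The first-return map of a permutation `σ` of `B` to a subset `P ⊆ B`:
`b ↦ σ^m b` for the minimal `m ≥ 1` with `σ^m b ∈ P`. -/
def firstRet (σ : Equiv.Perm B) (P : Finset B) (b : ↥P) : ↥P :=
  have h : ∃ m, 0 < m ∧ (σ ^ m) (b : B) ∈ P :=
    ⟨orderOf σ, orderOf_pos σ, by rw [pow_orderOf_eq_one]; simpa using b.2⟩
  ⟨(σ ^ Nat.find h) (b : B), (Nat.find_spec h).2⟩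

/-- An oriented ribbon graph: a triple of permutations of a finite set `B` such that
`σ₁` is a fixed-point-free involution and `σ₀ ∘ σ₁ ∘ σ₂ = id`. -/
structure RibbonGraph (B : Type) [Fintype B] [DecidableEq B] where
  s0 : Equiv.Perm B
  s1 : Equiv.Perm B
  s2 : Equiv.Perm B
  invol : ∀ b, s1 (s1 b) = b
  fpf : ∀ b, s1 b ≠ b
  triple : ∀ b, s0 (s1 (s2 b)) = b

namespace RibbonGraph

variable (D : RibbonGraph B)

/-- `v(𝔻)`: the number of orbits of `σ₀`. -/
noncomputable def vN : ℕ := orbCount fun a b : B => D.s0 a = b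

/-- `e(𝔻)`: the number of orbits of `σ₁`. -/
noncomputable def eN : ℕ := orbCount fun a b : B => D.s1 a = b

/-- `f(𝔻)`: the number of orbits of `σ₂`. -/
noncomputable def fN : ℕ := orbCount fun a b : B => D.s2 a = b

/-- `k(𝔻)`: the number of orbits of the subgroup generated by `σ₀` and `σ₁`. -/
noncomputable def kN : ℕ := orbCount fun a b : B => D.s0 a = b ∨ D.s1 a = b

/-- The genus `g(𝔻) = (2k − v + e − f)/2`. -/
noncomputable def gN : ℕ := (2 * D.kN + D.eN - D.vN - D.fN) / 2

/-- `𝔻` is connected if the subgroup generated by `σ₀` and `σ₁` acts transitively on `B`. -/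
def Connected : Prop :=
  ∀ a b : B, ∃ g ∈ Subgroup.closure ({D.s0, D.s1} : Set (Equiv.Perm B)), g a = b

end RibbonGraph

/-- A ribbon graph together with the bookkeeping needed for spanning subgraphs,
deletions and contractions: an ambient vertex permutation `s0` and edge involution `s1`
on `B`, and the set `act` of active half-edges (which is `s1`-invariant, `s1` being a
fixed-point-free involution on it).  The σ₀-orbits of `B` disjoint from `act` are the
isolated vertices; each contributes one vertex, one face and one connected component. -/
structure RG (B : Type) [Fintype B] [DecidableEq B] where
  act : Finset B
  s0 : Equiv.Perm B
  s1 : Equiv.Perm B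
  invol : ∀ b, s1 (s1 b) = b
  fpf : ∀ b ∈ act, s1 b ≠ b
  closed : ∀ b ∈ act, s1 b ∈ act

/-- A plain ribbon graph, viewed with all of its half-edges active. -/
def RibbonGraph.toRG (D : RibbonGraph B) : RG B :=
  ⟨Finset.univ, D.s0, D.s1, D.invol, fun b _ => D.fpf b, fun _ _ => Finset.mem_univ _⟩

namespace RG

variable (G : RG B)

/-- The edge (σ₁-orbit) `{a, σ₁ a}` of a half-edge `a`. -/
def edgeOf (a : B) : Finset B := {a, G.s1 a}

/-- The edge set `E(𝔻)`: the set of orbits `{b, σ₁ b}` of `σ₁`. -/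
def edges : Finset (Finset B) := G.act.image G.edgeOf

/-- `e(𝔻)`: the number of edges. -/
def numE : ℕ := G.edges.card

/-- `v(𝔻)`: the number of vertices, i.e. of `σ₀`-orbits (first-return orbits on the
active part together with the isolated vertices). -/
noncomputable def numV : ℕ := orbCount fun a b : B => G.s0 a = b

/-- The number of isolated vertices: `σ₀`-orbits of `B` disjoint from the active part. -/
noncomputable def isolated : ℕ :=
  Nat.card {x : Quot (fun a b : B => G.s0 a = b) // ∀ a : B, Quot.mk _ a = x → a ∉ G.act}

/-- The vertex permutation: first-return map of `σ₀` to the active half-edges. -/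
def ret0 : ↥G.act → ↥G.act := firstRet G.s0 G.act

/-- The edge involution restricted to the active half-edges. -/
def ret1 : ↥G.act → ↥G.act := fun b => ⟨G.s1 b, G.closed b b.2⟩

/-- `f(𝔻)`: the number of faces, i.e. orbits of the face permutation σ₂ = (σ₀σ₁)⁻¹
(an isolated vertex contributes one face). -/
noncomputable def numF : ℕ :=
  orbCount (fun a b : ↥G.act => G.ret0 (G.ret1 a) = b) + G.isolated

/-- `k(𝔻)`: the number of connected components (an isolated vertex is a component). -/
noncomputable def numK : ℕ :=
  orbCount (fun a b : ↥G.act => G.ret0 a = b ∨ G.ret1 a = b) + G.isolated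

/-- The nullity `n(𝔻) = e(𝔻) − v(𝔻) + k(𝔻)`. -/
noncomputable def numN : ℕ := G.numE + G.numK - G.numV

/-- The genus `g(𝔻) = (2k(𝔻) − v(𝔻) + e(𝔻) − f(𝔻))/2`. -/
noncomputable def genus : ℕ := (2 * G.numK + G.numE - G.numV - G.numF) / 2

/-- The spanning subgraph `H_S` determined by a set `S` of edges: the active half-edges
are those of `B_S = ⋃_{e ∈ S} e`; the ambient permutations are unchanged. -/
def spanning (S : Finset (Finset B)) : RG B where
  act := G.act.filter fun b => b ∈ S.biUnion id ∧ G.s1 b ∈ S.biUnion id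
  s0 := G.s0
  s1 := G.s1
  invol := G.invol
  fpf := fun b hb => G.fpf b (Finset.mem_filter.1 hb).1
  closed := by
    intro b hb
    rw [Finset.mem_filter] at hb ⊢
    exact ⟨G.closed b hb.1, hb.2.2, by rw [G.invol]; exact hb.2.1⟩

/-- The deletion `𝔻 − e` of the edge `e = {a, σ₁ a}`: the spanning subgraph on the
remaining edges. -/
def del (a : B) : RG B where
  act := G.act \ {a, G.s1 a}
  s0 := G.s0
  s1 := G.s1
  invol := G.invol
  fpf := fun b hb => G.fpf b (Finset.mem_sdiff.1 hb).1
  closed := by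
    intro b hb
    rw [Finset.mem_sdiff, Finset.mem_insert, Finset.mem_singleton] at hb ⊢
    push_neg at hb ⊢
    exact ⟨G.closed b hb.1,
      fun h => absurd (by rw [← h, G.invol] : b = G.s1 a) hb.2.2,
      fun h => absurd (G.s1.injective h) hb.2.1⟩

/-- The contraction `𝔻/e` of the edge `e = {a, σ₁ a}`: the two half-edges of `e` become
inactive and the vertex permutation becomes `τ = σ₀ ∘ (a, σ₁ a)`. -/
def contr (a : B) : RG B where
  act := G.act \ {a, G.s1 a}
  s0 := G.s0 * Equiv.swap a (G.s1 a)
  s1 := G.s1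
  invol := G.invol
  fpf := fun b hb => G.fpf b (Finset.mem_sdiff.1 hb).1
  closed := by
    intro b hb
    rw [Finset.mem_sdiff, Finset.mem_insert, Finset.mem_singleton] at hb ⊢
    push_neg at hb ⊢
    exact ⟨G.closed b hb.1,
      fun h => absurd (by rw [← h, G.invol] : b = G.s1 a) hb.2.2,
      fun h => absurd (G.s1.injective h) hb.2.1⟩

/-- The edge `{a, σ₁ a}` is a loop if its two half-edges lie in the same `σ₀`-orbit. -/
def IsLoop (a : B) : Prop := G.s0.SameCycle a (G.s1 a)

/-- The edge `{a, σ₁ a}` is a bridge if deleting it increases the number of connected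
components by one. -/
noncomputable def IsBridge (a : B) : Prop := (G.del a).numK = G.numK + 1

/-- `δ = −A² − A⁻²`. -/
noncomputable def lDelta : LaurentPolynomial ℤ :=
  -LaurentPolynomial.T 2 - LaurentPolynomial.T (-2)

/-- The Kauffman bracket of a ribbon graph:
`⟨𝔻⟩ = Σ_{S ⊆ E(𝔻)} A^{e(𝔻) − 2|S|} δ^{f(H_S) − 1}`. -/
noncomputable def bracket : LaurentPolynomial ℤ :=
  ∑ S ∈ G.edges.powerset,
    LaurentPolynomial.T ((G.numE : ℤ) - 2 * S.card) * lDelta ^ ((G.spanning S).numF - 1)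

/-- The Bollobás–Riordan–Tutte polynomial (subgraph expansion), in variables
`X = X₀`, `Y = X₁`, `Z = X₂`:
`C(𝔻; X, Y, Z) = Σ_{S ⊆ E(𝔻)} (X−1)^{k(H_S) − k(𝔻)} Y^{n(H_S)} Z^{g(H_S)}`. -/
noncomputable def brt : MvPolynomial (Fin 3) ℤ :=
  ∑ S ∈ G.edges.powerset,
    (MvPolynomial.X 0 - 1) ^ ((G.spanning S).numK - G.numK) *
      MvPolynomial.X 1 ^ (G.spanning S).numN *
      MvPolynomial.X 2 ^ (G.spanning S).genus

/-- Two half-edges lie in the same connected component (where an inactive half-edge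
belongs to the isolated vertex given by its `σ₀`-orbit). -/
def sameComp (x y : B) : Prop :=
  Relation.EqvGen (fun u v => G.s0 u = v ∨ (u ∈ G.act ∧ G.s1 u = v)) x y

/-- `M(H_S) = e(𝔻) − 2|S| + 2 f(H_S) − 2`, the maximal power of `A` contributed by the
spanning subgraph `H_S` to the Kauffman bracket. -/
noncomputable def mVal (S : Finset (Finset B)) : ℤ :=
  (G.numE : ℤ) - 2 * S.card + 2 * (G.spanning S).numF - 2

/-- The spanning trees of `𝔻`: edge sets `T` with `k(H_T) = 1` and `n(H_T) = 0`. -/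
noncomputable def spanningTrees : Finset (Finset (Finset B)) :=
  G.edges.powerset.filter fun T => (G.spanning T).numK = 1 ∧ (G.spanning T).numN = 0

/-- The number `i(T)` of internally active edges of `T`: edges `t ∈ T` that are
`≺`-minimal in their cut `{e ∈ E(𝔻) : k(H_{(T∖{t})∪{e}}) = 1}`. -/
noncomputable def numIntActive [LinearOrder (Finset B)] (T : Finset (Finset B)) : ℕ :=
  (T.filter fun t =>
    ∀ e ∈ G.edges, (G.spanning (insert e (T.erase t))).numK = 1 → t ≤ e).card

/-- The set `𝓔(T)` of externally active edges of `T`: edges `e ∉ T` that are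
`≺`-minimal in `{f ∈ T ∪ {e} : k(H_{(T∪{e})∖{f}}) = 1}`. -/
noncomputable def extActives [LinearOrder (Finset B)] (T : Finset (Finset B)) :
    Finset (Finset B) :=
  G.edges.filter fun e => e ∉ T ∧
    ∀ f ∈ insert e T, (G.spanning ((insert e T).erase f)).numK = 1 → e ≤ f

end RG

section AuxProof
set_option linter.unusedSectionVars false

variable {B : Type} [Fintype B] [DecidableEq B]

noncomputable def cyc (π : Equiv.Perm B) : ℕ := orbCount fun a b : B => π a = b

lemma sameCycle_iff_nat {π : Equiv.Perm B} {x y : B} :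
    π.SameCycle x y ↔ ∃ n : ℕ, (π ^ n) x = y := by
  constructor
  · intro h
    obtain ⟨i, _, hi⟩ := h.exists_pow_eq'
    exact ⟨i, hi⟩
  · rintro ⟨n, rfl⟩
    exact ⟨(n : ℤ), by rw [zpow_natCast]⟩

lemma sameCycle_pow {π : Equiv.Perm B} (x : B) (n : ℕ) : π.SameCycle x ((π ^ n) x) :=
  ⟨(n : ℤ), by rw [zpow_natCast]⟩

lemma eqvGen_iff_sameCycle {π : Equiv.Perm B} {x y : B} :
    Relation.EqvGen (fun a b : B => π a = b) x y ↔ π.SameCycle x y := by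
  constructor
  · intro h
    induction h with
    | rel a b hab => exact ⟨1, by simpa using hab⟩
    | refl a => exact Equiv.Perm.SameCycle.refl _ _
    | symm a b _ ih => exact ih.symm
    | trans a b c _ _ ih1 ih2 => exact ih1.trans ih2
  · intro h
    obtain ⟨n, rfl⟩ := sameCycle_iff_nat.mp h
    clear h
    induction n with
    | zero => simpa using Relation.EqvGen.refl x
    | succ n ih =>
        have hst : Relation.EqvGen (fun a b : B => π a = b) ((π ^ n) x) ((π ^ (n+1)) x) :=
          Relation.EqvGen.rel _ _ (by simp [pow_succ', Equiv.Perm.mul_apply])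
        exact Relation.EqvGen.trans _ _ _ ih hst

lemma quot_mk_perm_eq {π : Equiv.Perm B} {x y : B} :
    Quot.mk (fun a b : B => π a = b) x = Quot.mk (fun a b : B => π a = b) y ↔
      π.SameCycle x y := by
  rw [Quot.eq]; exact eqvGen_iff_sameCycle

lemma card_quot_le {r r' : B → B → Prop} (h : ∀ x y, r' x y → Relation.EqvGen r x y) :
    Nat.card (Quot r) ≤ Nat.card (Quot r') := by
  have hs : Function.Surjective
      (Quot.lift (Quot.mk r) (fun a b hab => Quot.eqvGen_sound (h a b hab)) :
        Quot r' → Quot r) := by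
    intro q
    induction q using Quot.ind with
    | _ a => exact ⟨Quot.mk _ a, rfl⟩
  exact Nat.card_le_card_of_surjective _ hs

def jrel (r : B → B → Prop) (a b : B) : B → B → Prop :=
  fun x y => r x y ∨ (x = a ∧ y = b)

lemma eqvGen_jrel_cases {r : B → B → Prop} {a b x y : B}
    (h : Relation.EqvGen (jrel r a b) x y) :
    Relation.EqvGen r x y ∨
      ((Relation.EqvGen r x a ∨ Relation.EqvGen r x b) ∧
       (Relation.EqvGen r y a ∨ Relation.EqvGen r y b)) := by
  induction h with
  | rel u v huv =>
      rcases huv with huv | ⟨rfl, rfl⟩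
      · exact Or.inl (Relation.EqvGen.rel _ _ huv)
      · exact Or.inr ⟨Or.inl (Relation.EqvGen.refl _), Or.inr (Relation.EqvGen.refl _)⟩
  | refl u => exact Or.inl (Relation.EqvGen.refl _)
  | symm u v _ ih =>
      rcases ih with ih | ⟨h1, h2⟩
      · exact Or.inl (Relation.EqvGen.symm _ _ ih)
      · exact Or.inr ⟨h2, h1⟩
  | trans u v w _ _ ih1 ih2 =>
      rcases ih1 with ih1 | ⟨h1, h2⟩
      · rcases ih2 with ih2 | ⟨h3, h4⟩
        · exact Or.inl (Relation.EqvGen.trans _ _ _ ih1 ih2)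
        · refine Or.inr ⟨?_, h4⟩
          rcases h3 with h3 | h3
          · exact Or.inl (Relation.EqvGen.trans _ _ _ ih1 h3)
          · exact Or.inr (Relation.EqvGen.trans _ _ _ ih1 h3)
      · rcases ih2 with ih2 | ⟨h3, h4⟩
        · refine Or.inr ⟨h1, ?_⟩
          rcases h2 with h2 | h2
          · exact Or.inl (Relation.EqvGen.trans _ _ _ (Relation.EqvGen.symm _ _ ih2) h2)
          · exact Or.inr (Relation.EqvGen.trans _ _ _ (Relation.EqvGen.symm _ _ ih2) h2)
        · exact Or.inr ⟨h1, h4⟩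

lemma card_quot_le_jrel_add_one (r : B → B → Prop) (a b : B) :
    Nat.card (Quot r) ≤ Nat.card (Quot (jrel r a b)) + 1 := by
  classical
  have key : Nat.card (Quot r) ≤ Nat.card (Quot (jrel r a b) ⊕ Unit) := by
    refine Nat.card_le_card_of_injective
      (Quot.lift
        (fun x => if Relation.EqvGen r x a then Sum.inr () else Sum.inl (Quot.mk _ x)) ?_) ?_
    · intro u v huv
      have he : Relation.EqvGen r u v := Relation.EqvGen.rel _ _ huv
      beta_reduce
      by_cases h : Relation.EqvGen r u a
      · rw [if_pos h, if_pos (Relation.EqvGen.trans _ _ _ (Relation.EqvGen.symm _ _ he) h)]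
      · rw [if_neg h, if_neg (fun hv => h (Relation.EqvGen.trans _ _ _ he hv))]
        exact congrArg Sum.inl (Quot.sound (Or.inl huv))
    · intro q1 q2
      induction q1 using Quot.ind with
      | _ u =>
      induction q2 using Quot.ind with
      | _ v =>
      intro hq
      simp only [Quot.lift_mk] at hq
      by_cases hu : Relation.EqvGen r u a <;> by_cases hv : Relation.EqvGen r v a
      · exact Quot.eqvGen_sound (Relation.EqvGen.trans _ _ _ hu (Relation.EqvGen.symm _ _ hv))
      · rw [if_pos hu, if_neg hv] at hq; exact absurd hq (by simp)
      · rw [if_neg hu, if_pos hv] at hq; exact absurd hq (by simp)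
      · rw [if_neg hu, if_neg hv] at hq
        have hj : Relation.EqvGen (jrel r a b) u v := Quot.eq.mp (Sum.inl.inj hq)
        rcases eqvGen_jrel_cases hj with h | ⟨h1, h2⟩
        · exact Quot.eqvGen_sound h
        · have hub : Relation.EqvGen r u b := h1.resolve_left hu
          have hvb : Relation.EqvGen r v b := h2.resolve_left hv
          exact Quot.eqvGen_sound
            (Relation.EqvGen.trans _ _ _ hub (Relation.EqvGen.symm _ _ hvb))
  have : Nat.card (Quot (jrel r a b) ⊕ Unit) = Nat.card (Quot (jrel r a b)) + 1 := by
    rw [Nat.card_sum]; simp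
  omega

lemma card_quot_jrel_lt {r : B → B → Prop} {a b : B}
    (hab : ¬ Relation.EqvGen r a b) :
    Nat.card (Quot (jrel r a b)) + 1 ≤ Nat.card (Quot r) := by
  classical
  set f : Quot r → Quot (jrel r a b) :=
    Quot.lift (Quot.mk _) (fun u v huv => Quot.sound (Or.inl huv)) with hf
  have hs : Function.Surjective f := by
    intro q
    induction q using Quot.ind with
    | _ u => exact ⟨Quot.mk _ u, rfl⟩
  have hne : Quot.mk r a ≠ Quot.mk r b := fun h => hab (Quot.eq.mp h)
  have hfe : f (Quot.mk r a) = f (Quot.mk r b) := Quot.sound (Or.inr ⟨rfl, rfl⟩)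
  have hle := Nat.card_le_card_of_surjective f hs
  rcases lt_or_eq_of_le hle with h | h
  · omega
  · exfalso
    have hbij := (Nat.bijective_iff_surjective_and_card f).mpr ⟨hs, h.symm⟩
    exact hne (hbij.injective hfe)

lemma sameCycle_mul_swap {π : Equiv.Perm B} {a b : B} (hab : a ≠ b)
    (h : ¬ π.SameCycle a b) : (π * Equiv.swap a b).SameCycle a b := by
  have hper : ∃ m : ℕ, 0 < m ∧ (π ^ m) b = b :=
    ⟨orderOf π, orderOf_pos π, by rw [pow_orderOf_eq_one]; rfl⟩
  have key : ∀ j, 1 ≤ j → j ≤ Nat.find hper → ((π * Equiv.swap a b) ^ j) a = (π ^ j) b := by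
    intro j hj1 hjn
    induction j with
    | zero => omega
    | succ j ih =>
      rcases Nat.eq_zero_or_pos j with rfl | hj
      · simp [Equiv.swap_apply_left]
      · have hja : (π ^ j) b ≠ a := by
          intro hcontra
          exact h (Equiv.Perm.SameCycle.symm ⟨(j : ℤ), by rw [zpow_natCast]; exact hcontra⟩)
        have hjb : (π ^ j) b ≠ b := by
          intro hcontra
          exact Nat.find_min hper (by omega) ⟨hj, hcontra⟩
        have ihj := ih hj (by omega)
        calc ((π * Equiv.swap a b) ^ (j + 1)) a
            = (π * Equiv.swap a b) (((π * Equiv.swap a b) ^ j) a) := by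
              rw [pow_succ']; rfl
          _ = π (Equiv.swap a b ((π ^ j) b)) := by rw [ihj]; rfl
          _ = π ((π ^ j) b) := by rw [Equiv.swap_apply_of_ne_of_ne hja hjb]
          _ = (π ^ (j + 1)) b := by rw [pow_succ']; rfl
  refine ⟨(Nat.find hper : ℤ), ?_⟩
  rw [zpow_natCast, key (Nat.find hper) (Nat.find_spec hper).1 le_rfl]
  exact (Nat.find_spec hper).2

lemma cyc_swap_aux {π : Equiv.Perm B} {a b : B} (hab : a ≠ b) :
    Nat.card (Quot (jrel (fun x y : B => (π * Equiv.swap a b) x = y) a b)) =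
      Nat.card (Quot (jrel (fun x y : B => π x = y) a b)) := by
  set π' := π * Equiv.swap a b with hπ'
  have h1 : ∀ x y, jrel (fun x y : B => π' x = y) a b x y →
      Relation.EqvGen (jrel (fun x y : B => π x = y) a b) x y := by
    rintro x y (hxy | ⟨rfl, rfl⟩)
    · rcases eq_or_ne x a with rfl | hxa
      · have hy : y = π b := by rw [← hxy, hπ']; simp [Equiv.swap_apply_left]
        subst hy
        exact Relation.EqvGen.trans _ _ _
          (Relation.EqvGen.rel _ _ (Or.inr ⟨rfl, rfl⟩))
          (Relation.EqvGen.rel _ _ (Or.inl rfl))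
      · rcases eq_or_ne x b with rfl | hxb
        · have hy : y = π a := by rw [← hxy, hπ']; simp [Equiv.swap_apply_right]
          subst hy
          exact Relation.EqvGen.trans _ _ _
            (Relation.EqvGen.symm _ _ (Relation.EqvGen.rel _ _ (Or.inr ⟨rfl, rfl⟩)))
            (Relation.EqvGen.rel _ _ (Or.inl rfl))
        · have hy : y = π x := by
            rw [← hxy, hπ']; simp [Equiv.swap_apply_of_ne_of_ne hxa hxb]
          subst hy
          exact Relation.EqvGen.rel _ _ (Or.inl rfl)
    · exact Relation.EqvGen.rel _ _ (Or.inr ⟨rfl, rfl⟩)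
  have h2 : ∀ x y, jrel (fun x y : B => π x = y) a b x y →
      Relation.EqvGen (jrel (fun x y : B => π' x = y) a b) x y := by
    rintro x y (hxy | ⟨rfl, rfl⟩)
    · rcases eq_or_ne x a with rfl | hxa
      · have hy : y = π' b := by rw [← hxy, hπ']; simp [Equiv.swap_apply_right]
        subst hy
        exact Relation.EqvGen.trans _ _ _
          (Relation.EqvGen.rel _ _ (Or.inr ⟨rfl, rfl⟩))
          (Relation.EqvGen.rel _ _ (Or.inl rfl))
      · rcases eq_or_ne x b with rfl | hxb
        · have hy : y = π' a := by rw [← hxy, hπ']; simp [Equiv.swap_apply_left]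
          subst hy
          exact Relation.EqvGen.trans _ _ _
            (Relation.EqvGen.symm _ _ (Relation.EqvGen.rel _ _ (Or.inr ⟨rfl, rfl⟩)))
            (Relation.EqvGen.rel _ _ (Or.inl rfl))
        · have hy : y = π' x := by
            rw [← hxy, hπ']; simp [Equiv.swap_apply_of_ne_of_ne hxa hxb]
          subst hy
          exact Relation.EqvGen.rel _ _ (Or.inl rfl)
    · exact Relation.EqvGen.rel _ _ (Or.inr ⟨rfl, rfl⟩)
  exact le_antisymm (card_quot_le h2) (card_quot_le h1)

lemma cyc_mul_swap_le {π : Equiv.Perm B} {a b : B} (hab : a ≠ b) :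
    cyc (π * Equiv.swap a b) ≤ cyc π + 1 := by
  have e1 : cyc (π * Equiv.swap a b) ≤
      Nat.card (Quot (jrel (fun x y : B => (π * Equiv.swap a b) x = y) a b)) + 1 :=
    card_quot_le_jrel_add_one _ a b
  have e2 : Nat.card (Quot (jrel (fun x y : B => π x = y) a b)) ≤ cyc π :=
    card_quot_le (fun x y hxy => Relation.EqvGen.rel _ _ (Or.inl hxy))
  rw [cyc_swap_aux hab] at e1
  calc cyc (π * Equiv.swap a b) ≤ _ + 1 := e1
    _ ≤ cyc π + 1 := by omega

lemma cyc_mul_swap_lt {π : Equiv.Perm B} {a b : B} (hab : a ≠ b)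
    (h : ¬ π.SameCycle a b) :
    cyc (π * Equiv.swap a b) + 1 ≤ cyc π := by
  set π' := π * Equiv.swap a b with hπ'
  have hsc : π'.SameCycle a b := sameCycle_mul_swap hab h
  have e1 : cyc π' = Nat.card (Quot (jrel (fun x y : B => π' x = y) a b)) := by
    refine le_antisymm (card_quot_le ?_) (card_quot_le ?_)
    · rintro x y (hxy | ⟨rfl, rfl⟩)
      · exact Relation.EqvGen.rel _ _ hxy
      · exact eqvGen_iff_sameCycle.mpr hsc
    · intro x y hxy
      exact Relation.EqvGen.rel _ _ (Or.inl hxy)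
  have e2 : Nat.card (Quot (jrel (fun x y : B => π x = y) a b)) + 1 ≤ cyc π :=
    card_quot_jrel_lt (fun hg => h (eqvGen_iff_sameCycle.mp hg))
  rw [e1, cyc_swap_aux hab]
  exact e2

lemma firstRet_eq {σ : Equiv.Perm B} {P : Finset B} (b : ↥P) {m : ℕ} (hm : 0 < m)
    (hmem : (σ ^ m) (b : B) ∈ P) (hmin : ∀ j, 0 < j → j < m → (σ ^ j) (b : B) ∉ P) :
    (firstRet σ P b : B) = (σ ^ m) (b : B) := by
  have h : ∃ m, 0 < m ∧ (σ ^ m) (b : B) ∈ P := ⟨m, hm, hmem⟩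
  have hval : (firstRet σ P b : B) = (σ ^ Nat.find h) (b : B) := rfl
  have h1 : Nat.find h ≤ m := Nat.find_min' h ⟨hm, hmem⟩
  have h2 : ¬ Nat.find h < m := fun hlt => hmin _ (Nat.find_spec h).1 hlt (Nat.find_spec h).2
  rw [hval, le_antisymm h1 (not_lt.mp h2)]

lemma card_quot_decomp (π : Equiv.Perm B) (P : Finset B) :
    Nat.card (Quot (fun a b : B => π a = b)) =
      Nat.card (Quot (fun p q : ↥P => firstRet π P p = q)) +
      Nat.card {x : Quot (fun a b : B => π a = b) // ∀ a : B, Quot.mk _ a = x → a ∉ P} := by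
  classical
  set rB : B → B → Prop := fun a b : B => π a = b with hrB
  set rP : ↥P → ↥P → Prop := fun p q : ↥P => firstRet π P p = q with hrP
  -- EqvGen rP transfers to SameCycle π on values
  have hrP_sc : ∀ p q : ↥P, Relation.EqvGen rP p q → π.SameCycle (p : B) (q : B) := by
    intro p q h
    induction h with
    | rel u v huv =>
        have : (v : B) = (firstRet π P u : B) := by rw [huv]
        rw [this, show (firstRet π P u : B) = (π ^ Nat.find _) (u : B) from rfl]
        exact sameCycle_pow _ _
    | refl u => exact Equiv.Perm.SameCycle.refl _ _
    | symm u v _ ih => exact ih.symm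
    | trans u v w _ _ ih1 ih2 => exact ih1.trans ih2
  have not_hits_avoid : ∀ x : B, ¬ (∃ m : ℕ, (π ^ m) x ∈ P) →
      ∀ a : B, Quot.mk rB a = Quot.mk rB x → a ∉ P := by
    intro x hx a ha haP
    apply hx
    have hsc : π.SameCycle x a := (quot_mk_perm_eq.mp ha).symm
    obtain ⟨n, hn⟩ := sameCycle_iff_nat.mp hsc
    exact ⟨n, hn ▸ haP⟩
  set Φ₀ : B → Quot rP ⊕ {x : Quot rB // ∀ a : B, Quot.mk _ a = x → a ∉ P} := fun x =>
    if h : ∃ m : ℕ, (π ^ m) x ∈ P then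
      Sum.inl (Quot.mk rP ⟨(π ^ Nat.find h) x, Nat.find_spec h⟩)
    else Sum.inr ⟨Quot.mk rB x, not_hits_avoid x h⟩ with hΦ₀
  have sound : ∀ u v : B, rB u v → Φ₀ u = Φ₀ v := by
    intro u v huv
    have hv : v = π u := huv.symm
    subst hv
    by_cases hu : ∃ m : ℕ, (π ^ m) u ∈ P
    · have hv : ∃ m : ℕ, (π ^ m) (π u) ∈ P := by
        obtain ⟨m, hm⟩ := hu
        rcases Nat.eq_zero_or_pos m with rfl | hm0
        · refine ⟨orderOf π - 1, ?_⟩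
          have ho : orderOf π - 1 + 1 = orderOf π := by
            have := orderOf_pos π; omega
          have : (π ^ (orderOf π - 1)) (π u) = (π ^ orderOf π) u := by
            rw [← ho, pow_succ]; rfl
          rw [this, pow_orderOf_eq_one]
          simpa using hm
        · have hm' : m - 1 + 1 = m := by omega
          refine ⟨m - 1, ?_⟩
          have : (π ^ (m - 1)) (π u) = (π ^ m) u := by rw [← hm', pow_succ]; rfl
          rw [this]; exact hm
      rw [hΦ₀]; simp only
      rw [dif_pos hu, dif_pos hv]
      congr 1
      set k := Nat.find hv with hk
      have hkspec : (π ^ k) (π u) ∈ P := Nat.find_spec hv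
      have hk1 : (π ^ (k + 1)) u ∈ P := by rw [pow_succ]; exact hkspec
      by_cases hu0 : u ∈ P
      · have hfind0 : Nat.find hu = 0 := by
          rw [Nat.find_eq_zero]; simpa using hu0
        have helt : ((π ^ Nat.find hu) u : B) = u := by rw [hfind0]; simp
        have hfeu : (⟨(π ^ Nat.find hu) u, Nat.find_spec hu⟩ : ↥P) = ⟨u, hu0⟩ :=
          Subtype.ext helt
        rw [hfeu]
        apply Quot.sound
        show firstRet π P ⟨u, hu0⟩ = ⟨(π ^ k) (π u), Nat.find_spec hv⟩
        apply Subtype.ext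
        have hmin : ∀ j, 0 < j → j < k + 1 → (π ^ j) ((⟨u, hu0⟩ : ↥P) : B) ∉ P := by
          intro j hj0 hjk hmem
          have hj'' : j - 1 + 1 = j := by omega
          have hstep : (π ^ (j - 1)) (π u) ∈ P := by
            rw [← Equiv.Perm.mul_apply, ← pow_succ, hj'']
            exact hmem
          exact Nat.find_min hv (by omega) hstep
        rw [firstRet_eq (⟨u, hu0⟩ : ↥P) (by omega : 0 < k + 1) hk1 hmin]
        show (π ^ (k + 1)) u = (π ^ k) (π u)
        rw [pow_succ]; rfl
      · -- u ∉ P : elements are equal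
        have hm1 : 0 < Nat.find hu := by
          rcases Nat.eq_zero_or_pos (Nat.find hu) with h0 | h0
          · exfalso
            have := Nat.find_spec hu
            rw [h0] at this
            simp at this
            exact hu0 this
          · exact h0
        set m := Nat.find hu with hm
        have hle1 : k ≤ m - 1 := by
          apply Nat.find_min' hv
          have hm' : m - 1 + 1 = m := by omega
          rw [← Equiv.Perm.mul_apply, ← pow_succ, hm']
          exact Nat.find_spec hu
        have hle2 : m ≤ k + 1 := Nat.find_min' hu hk1
        have hmk : m = k + 1 := by omega
        have helts : (⟨(π ^ m) u, Nat.find_spec hu⟩ : ↥P) =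
            ⟨(π ^ k) (π u), Nat.find_spec hv⟩ := by
          apply Subtype.ext
          show (π ^ m) u = (π ^ k) (π u)
          rw [hmk, pow_succ]; rfl
        rw [helts]
    · have hv : ¬ ∃ m : ℕ, (π ^ m) (π u) ∈ P := by
        intro ⟨m, hm⟩
        exact hu ⟨m + 1, by rw [pow_succ]; exact hm⟩
      rw [hΦ₀]; simp only
      rw [dif_neg hu, dif_neg hv]
      congr 1
      exact Subtype.ext (Quot.sound rfl)
  set Φ := Quot.lift Φ₀ sound with hΦ
  have hinj : Function.Injective Φ := by
    intro q1 q2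
    induction q1 using Quot.ind with
    | _ u =>
    induction q2 using Quot.ind with
    | _ v =>
    intro hq
    have hq' : Φ₀ u = Φ₀ v := hq
    by_cases hu : ∃ m : ℕ, (π ^ m) u ∈ P <;> by_cases hv : ∃ m : ℕ, (π ^ m) v ∈ P
    · rw [hΦ₀] at hq'; simp only at hq'
      rw [dif_pos hu, dif_pos hv] at hq'
      have hmk := Sum.inl.inj hq'
      have hsc : π.SameCycle ((π ^ Nat.find hu) u) ((π ^ Nat.find hv) v) := by
        have := Quot.eq.mp hmk
        exact hrP_sc _ _ this
      have h1 : π.SameCycle u ((π ^ Nat.find hu) u) := sameCycle_pow _ _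
      have h2 : π.SameCycle v ((π ^ Nat.find hv) v) := sameCycle_pow _ _
      exact quot_mk_perm_eq.mpr ((h1.trans hsc).trans h2.symm)
    · rw [hΦ₀] at hq'; simp only at hq'
      rw [dif_pos hu, dif_neg hv] at hq'
      exact absurd hq' (by simp)
    · rw [hΦ₀] at hq'; simp only at hq'
      rw [dif_neg hu, dif_pos hv] at hq'
      exact absurd hq' (by simp)
    · rw [hΦ₀] at hq'; simp only at hq'
      rw [dif_neg hu, dif_neg hv] at hq'
      have := Sum.inr.inj hq'
      exact congrArg Subtype.val this
  have hsurj : Function.Surjective Φ := by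
    rintro (q | ⟨x, hx⟩)
    · induction q using Quot.ind with
      | _ p =>
      refine ⟨Quot.mk rB (p : B), ?_⟩
      have hp : ∃ m : ℕ, (π ^ m) (p : B) ∈ P := ⟨0, by simpa using p.2⟩
      have : Φ (Quot.mk rB (p : B)) = Φ₀ (p : B) := rfl
      rw [this, hΦ₀]; simp only
      rw [dif_pos hp]
      have hfind0 : Nat.find hp = 0 := by rw [Nat.find_eq_zero]; simpa using p.2
      have hfeu : (⟨(π ^ Nat.find hp) (p : B), Nat.find_spec hp⟩ : ↥P) = p := by
        apply Subtype.ext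
        show (π ^ Nat.find hp) (p : B) = (p : B)
        rw [hfind0]; simp
      rw [hfeu]
    · induction x using Quot.ind with
      | _ a =>
      refine ⟨Quot.mk rB a, ?_⟩
      have ha : ¬ ∃ m : ℕ, (π ^ m) a ∈ P := by
        rintro ⟨m, hm⟩
        have : Quot.mk rB ((π ^ m) a) = Quot.mk rB a :=
          quot_mk_perm_eq.mpr (sameCycle_pow a m).symm
        exact hx _ this hm
      have : Φ (Quot.mk rB a) = Φ₀ a := rfl
      rw [this, hΦ₀]; simp only
      rw [dif_neg ha]
  have hbij : Function.Bijective Φ := ⟨hinj, hsurj⟩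
  rw [Nat.card_eq_of_bijective Φ hbij, Nat.card_sum]
-- continuation: avoid-class transfer
lemma pow_eq_of_avoid {π σ : Equiv.Perm B} {P : Finset B}
    (h : ∀ c, c ∉ P → π c = σ c) {a : B} (ha : ∀ n : ℕ, (σ ^ n) a ∉ P) :
    ∀ n : ℕ, (π ^ n) a = (σ ^ n) a := by
  intro n
  induction n with
  | zero => rfl
  | succ n ih =>
    calc (π ^ (n + 1)) a = π ((π ^ n) a) := by rw [pow_succ']; rfl
      _ = π ((σ ^ n) a) := by rw [ih]
      _ = σ ((σ ^ n) a) := h _ (ha n)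
      _ = (σ ^ (n + 1)) a := by rw [pow_succ']; rfl

lemma card_avoid_le {π σ : Equiv.Perm B} {P : Finset B} (h : ∀ c, c ∉ P → π c = σ c) :
    Nat.card {x : Quot (fun a b : B => σ a = b) // ∀ a : B, Quot.mk _ a = x → a ∉ P} ≤
      Nat.card {x : Quot (fun a b : B => π a = b) // ∀ a : B, Quot.mk _ a = x → a ∉ P} := by
  classical
  set rσ : B → B → Prop := fun a b : B => σ a = b with hrσ
  set rπ : B → B → Prop := fun a b : B => π a = b with hrπ
  have main : ∀ a : B, (∀ c, Quot.mk rσ c = Quot.mk rσ a → c ∉ P) →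
      (∀ n : ℕ, (π ^ n) a = (σ ^ n) a) ∧
      (∀ c, Quot.mk rπ c = Quot.mk rπ a → c ∉ P) := by
    intro a ha
    have hpow : ∀ n : ℕ, (σ ^ n) a ∉ P := fun n =>
      ha _ (quot_mk_perm_eq.mpr (sameCycle_pow a n).symm)
    have heq := pow_eq_of_avoid h hpow
    refine ⟨heq, ?_⟩
    intro c hc
    have hsc : π.SameCycle a c := (quot_mk_perm_eq.mp hc).symm
    obtain ⟨n, hn⟩ := sameCycle_iff_nat.mp hsc
    rw [heq n] at hn
    rw [← hn]
    exact hpow n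
  set F : {x : Quot rσ // ∀ a : B, Quot.mk _ a = x → a ∉ P} →
      {x : Quot rπ // ∀ a : B, Quot.mk _ a = x → a ∉ P} := fun x =>
    ⟨Quot.mk rπ (Quot.exists_rep x.1).choose, by
      have hch := (Quot.exists_rep x.1).choose_spec
      exact (main _ (fun c hc => x.2 c (by rw [hc, hch]))).2⟩ with hF
  apply Nat.card_le_card_of_injective F
  intro x y hxy
  have hx := (Quot.exists_rep x.1).choose_spec
  have hy := (Quot.exists_rep y.1).choose_spec
  have hax : ∀ c, Quot.mk rσ c = Quot.mk rσ (Quot.exists_rep x.1).choose → c ∉ P :=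
    fun c hc => x.2 c (by rw [hc, hx])
  have hval : Quot.mk rπ (Quot.exists_rep x.1).choose =
      Quot.mk rπ (Quot.exists_rep y.1).choose := congrArg Subtype.val hxy
  have hsc : π.SameCycle (Quot.exists_rep x.1).choose (Quot.exists_rep y.1).choose :=
    quot_mk_perm_eq.mp hval
  obtain ⟨n, hn⟩ := sameCycle_iff_nat.mp hsc
  rw [(main _ hax).1 n] at hn
  have : Quot.mk rσ (Quot.exists_rep x.1).choose = Quot.mk rσ (Quot.exists_rep y.1).choose :=
    quot_mk_perm_eq.mpr ⟨(n : ℤ), by rw [zpow_natCast]; exact hn⟩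
  apply Subtype.ext
  rw [← hx, ← hy, this]

lemma card_avoid_eq {π σ : Equiv.Perm B} {P : Finset B} (h : ∀ c, c ∉ P → π c = σ c) :
    Nat.card {x : Quot (fun a b : B => σ a = b) // ∀ a : B, Quot.mk _ a = x → a ∉ P} =
      Nat.card {x : Quot (fun a b : B => π a = b) // ∀ a : B, Quot.mk _ a = x → a ∉ P} :=
  le_antisymm (card_avoid_le h) (card_avoid_le (fun c hc => (h c hc).symm))

-- Application to ribbon graphs
def actSet (D : RibbonGraph B) (S : Finset (Finset B)) : Finset B := (D.toRG.spanning S).act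

lemma s1_mem_actSet (D : RibbonGraph B) {S : Finset (Finset B)} {b : B}
    (hb : b ∈ actSet D S) : D.s1 b ∈ actSet D S :=
  (D.toRG.spanning S).closed b hb

lemma PSet_eq (D : RibbonGraph B) (S : Finset (Finset B)) :
    actSet D S = Finset.univ.filter
      fun c => c ∈ S.biUnion id ∧ D.s1 c ∈ S.biUnion id := rfl

lemma mem_actSet (D : RibbonGraph B) {S : Finset (Finset B)} (hS : S ⊆ D.toRG.edges) {b : B} :
    b ∈ actSet D S ↔ ({b, D.s1 b} : Finset B) ∈ S := by
  rw [PSet_eq, Finset.mem_filter]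
  simp only [Finset.mem_biUnion, id, Finset.mem_univ, true_and]
  constructor
  · rintro ⟨⟨t, htS, hbt⟩, -⟩
    obtain ⟨c, -, hc⟩ := Finset.mem_image.mp (hS htS)
    have ht : t = ({c, D.s1 c} : Finset B) := hc.symm
    rw [ht] at hbt
    rcases Finset.mem_insert.mp hbt with rfl | hbs
    · rwa [← ht]
    · have hb : b = D.s1 c := Finset.mem_singleton.mp hbs
      subst hb
      have hpair : ({D.s1 c, D.s1 (D.s1 c)} : Finset B) = {c, D.s1 c} := by
        rw [D.invol]; exact Finset.pair_comm _ _
      rw [hpair, ← ht]; exact htS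
  · intro hbS
    exact ⟨⟨_, hbS, Finset.mem_insert_self _ _⟩,
      ⟨_, hbS, Finset.mem_insert_of_mem (Finset.mem_singleton_self _)⟩⟩

def tauFun (D : RibbonGraph B) (S : Finset (Finset B)) : B → B :=
  fun b => if b ∈ actSet D S then D.s1 b else b

lemma tauFun_invol (D : RibbonGraph B) (S : Finset (Finset B)) :
    Function.Involutive (tauFun D S) := by
  intro b
  by_cases h : b ∈ actSet D S
  · simp only [tauFun, if_pos h, if_pos (s1_mem_actSet D h)]
    exact D.invol b
  · simp only [tauFun, if_neg h]

def piPerm (D : RibbonGraph B) (S : Finset (Finset B)) : Equiv.Perm B :=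
  D.s0 * Function.Involutive.toPerm (tauFun D S) (tauFun_invol D S)

lemma piPerm_apply (D : RibbonGraph B) (S : Finset (Finset B)) (b : B) :
    piPerm D S b = D.s0 (if b ∈ actSet D S then D.s1 b else b) := rfl

lemma PSet_empty (D : RibbonGraph B) : actSet D ∅ = ∅ := by
  rw [PSet_eq]
  ext b
  simp

lemma piPerm_empty (D : RibbonGraph B) : piPerm D ∅ = D.s0 := by
  apply Equiv.ext
  intro b
  rw [piPerm_apply, PSet_empty]
  simp

lemma piPerm_insert (D : RibbonGraph B) {S : Finset (Finset B)} {e : Finset B}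
    (hS : S ⊆ D.toRG.edges) (he : e ∈ D.toRG.edges) (heS : e ∉ S) :
    ∃ a : B, a ≠ D.s1 a ∧
      piPerm D (insert e S) = piPerm D S * Equiv.swap a (D.s1 a) := by
  obtain ⟨a, -, hae⟩ := Finset.mem_image.mp he
  have hea : e = ({a, D.s1 a} : Finset B) := hae.symm
  have hS' : insert e S ⊆ D.toRG.edges := Finset.insert_subset he hS
  have hne : a ≠ D.s1 a := fun h => D.fpf a h.symm
  refine ⟨a, hne, ?_⟩
  have pair_eq : ∀ b : B, ({b, D.s1 b} : Finset B) = {a, D.s1 a} ↔ (b = a ∨ b = D.s1 a) := by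
    intro b
    constructor
    · intro hp
      have : b ∈ ({a, D.s1 a} : Finset B) := by
        rw [← hp]; exact Finset.mem_insert_self _ _
      simpa using this
    · rintro (rfl | rfl)
      · rfl
      · rw [D.invol]; exact Finset.pair_comm _ _
  have hmem' : ∀ b : B, b ∈ actSet D (insert e S) ↔ (b = a ∨ b = D.s1 a) ∨ b ∈ actSet D S := by
    intro b
    rw [mem_actSet D hS', mem_actSet D hS, hea, Finset.mem_insert, pair_eq b, or_comm]
  have hanot : a ∉ actSet D S := by
    rw [mem_actSet D hS]
    intro hmem
    rw [hea] at heS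
    exact heS hmem
  have hs1not : D.s1 a ∉ actSet D S := by
    rw [mem_actSet D hS]
    intro hmem
    rw [(pair_eq (D.s1 a)).mpr (Or.inr rfl)] at hmem
    rw [hea] at heS
    exact heS hmem
  apply Equiv.ext
  intro b
  show piPerm D (insert e S) b = piPerm D S (Equiv.swap a (D.s1 a) b)
  rcases eq_or_ne b a with rfl | hba
  · rw [Equiv.swap_apply_left, piPerm_apply, piPerm_apply, if_neg hs1not,
      if_pos ((hmem' b).mpr (Or.inl (Or.inl rfl)))]
  · rcases eq_or_ne b (D.s1 a) with rfl | hbs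
    · rw [Equiv.swap_apply_right, piPerm_apply, piPerm_apply, if_neg hanot,
        if_pos ((hmem' _).mpr (Or.inl (Or.inr rfl))), D.invol]
    · rw [Equiv.swap_apply_of_ne_of_ne hba hbs, piPerm_apply, piPerm_apply]
      have hiff : b ∈ actSet D (insert e S) ↔ b ∈ actSet D S := by
        rw [hmem']
        constructor
        · rintro ((rfl | rfl) | h)
          · exact absurd rfl hba
          · exact absurd rfl hbs
          · exact h
        · exact Or.inr
      by_cases hb : b ∈ actSet D S
      · rw [if_pos hb, if_pos (hiff.mpr hb)]
      · rw [if_neg hb, if_neg (fun hh => hb (hiff.mp hh))]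

lemma firstRet_key (D : RibbonGraph B) (S : Finset (Finset B)) {b : B} (hb : b ∈ actSet D S) :
    ∀ m : ℕ, 0 < m → (∀ j, 0 < j → j < m → (D.s0 ^ j) (D.s1 b) ∉ actSet D S) →
      ((piPerm D S) ^ m) b = (D.s0 ^ m) (D.s1 b) := by
  intro m
  induction m with
  | zero => intro h; exact absurd h (by omega)
  | succ m ih =>
    intro _ hmin
    rcases Nat.eq_zero_or_pos m with rfl | hm
    · rw [pow_one, pow_one, piPerm_apply, if_pos hb]
    · have ihm := ih hm (fun j hj1 hj2 => hmin j hj1 (by omega))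
      calc ((piPerm D S) ^ (m + 1)) b = (piPerm D S) (((piPerm D S) ^ m) b) := by
            rw [pow_succ']; rfl
        _ = (piPerm D S) ((D.s0 ^ m) (D.s1 b)) := by rw [ihm]
        _ = D.s0 ((D.s0 ^ m) (D.s1 b)) := by
            rw [piPerm_apply, if_neg (hmin m hm (by omega))]
        _ = (D.s0 ^ (m + 1)) (D.s1 b) := by rw [pow_succ']; rfl

lemma firstRet_piPerm (D : RibbonGraph B) (S : Finset (Finset B)) (b : ↥(actSet D S)) :
    firstRet (piPerm D S) (actSet D S) b =
      firstRet D.s0 (actSet D S) ⟨D.s1 (b : B), s1_mem_actSet D b.2⟩ := by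
  have h2 : ∃ m, 0 < m ∧ (D.s0 ^ m) (D.s1 (b : B)) ∈ actSet D S :=
    ⟨orderOf D.s0, orderOf_pos D.s0, by
      rw [pow_orderOf_eq_one]; simpa using s1_mem_actSet D b.2⟩
  have hm2pos := (Nat.find_spec h2).1
  have hm2mem := (Nat.find_spec h2).2
  have hm2min : ∀ j, 0 < j → j < Nat.find h2 → (D.s0 ^ j) (D.s1 (b : B)) ∉ actSet D S :=
    fun j hj hjm hmem => Nat.find_min h2 hjm ⟨hj, hmem⟩
  have hkey : ((piPerm D S) ^ Nat.find h2) (b : B) = (D.s0 ^ Nat.find h2) (D.s1 (b : B)) :=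
    firstRet_key D S b.2 _ hm2pos hm2min
  have hminpi : ∀ j, 0 < j → j < Nat.find h2 → ((piPerm D S) ^ j) (b : B) ∉ actSet D S := by
    intro j hj0 hjm hmem
    have hkeyj : ((piPerm D S) ^ j) (b : B) = (D.s0 ^ j) (D.s1 (b : B)) :=
      firstRet_key D S b.2 j hj0 (fun i hi1 hi2 => hm2min i hi1 (by omega))
    rw [hkeyj] at hmem
    exact hm2min j hj0 hjm hmem
  have hmempi : ((piPerm D S) ^ Nat.find h2) (b : B) ∈ actSet D S := by
    rw [hkey]; exact hm2mem
  apply Subtype.ext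
  rw [firstRet_eq b hm2pos hmempi hminpi,
    firstRet_eq (⟨D.s1 (b : B), s1_mem_actSet D b.2⟩ : ↥(actSet D S)) hm2pos hm2mem hm2min]
  exact hkey

lemma numF_spanning (D : RibbonGraph B) (S : Finset (Finset B)) :
    (D.toRG.spanning S).numF = cyc (piPerm D S) := by
  have hdecomp := card_quot_decomp (piPerm D S) (actSet D S)
  have havoid : ∀ c, c ∉ actSet D S → piPerm D S c = D.s0 c := by
    intro c hc
    rw [piPerm_apply, if_neg hc]
  have hiso := card_avoid_eq (π := piPerm D S) (σ := D.s0) (P := actSet D S) havoid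
  have hrel : (fun p q : ↥(actSet D S) => firstRet (piPerm D S) (actSet D S) p = q) =
      (fun p q : ↥(actSet D S) =>
        (D.toRG.spanning S).ret0 ((D.toRG.spanning S).ret1 p) = q) := by
    funext p q
    rw [firstRet_piPerm D S p]
    rfl
  show Nat.card (Quot (fun p q : ↥(actSet D S) =>
      (D.toRG.spanning S).ret0 ((D.toRG.spanning S).ret1 p) = q)) +
    Nat.card {x : Quot (fun a b : B => D.s0 a = b) //
      ∀ a : B, Quot.mk _ a = x → a ∉ actSet D S} = Nat.card (Quot (fun a b : B => piPerm D S a = b))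
  rw [hiso, ← hrel, hdecomp]

lemma one_le_cyc [Nonempty B] (π : Equiv.Perm B) : 1 ≤ cyc π := by
  have h1 : Nonempty (Quot (fun a b : B => π a = b)) := ⟨Quot.mk _ (Classical.arbitrary B)⟩
  exact Nat.one_le_iff_ne_zero.mpr (Nat.card_ne_zero.mpr ⟨h1, inferInstance⟩)

lemma cyc_piPerm_le (D : RibbonGraph B) :
    ∀ S : Finset (Finset B), S ⊆ D.toRG.edges → cyc (piPerm D S) ≤ cyc D.s0 + S.card := by
  intro S
  induction S using Finset.induction_on with
  | empty => intro _; rw [piPerm_empty]; simp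
  | @insert e S heS ih =>
    intro hsub
    have hS : S ⊆ D.toRG.edges := (Finset.subset_insert _ _).trans hsub
    have he : e ∈ D.toRG.edges := hsub (Finset.mem_insert_self _ _)
    obtain ⟨a, hne, hpi⟩ := piPerm_insert D hS he heS
    calc cyc (piPerm D (insert e S)) = cyc (piPerm D S * Equiv.swap a (D.s1 a)) := by rw [hpi]
      _ ≤ cyc (piPerm D S) + 1 := cyc_mul_swap_le hne
      _ ≤ cyc D.s0 + S.card + 1 := by have := ih hS; omega
      _ = cyc D.s0 + (insert e S).card := by rw [Finset.card_insert_of_notMem heS]; omega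

lemma cyc_piPerm_lt (D : RibbonGraph B) (hL : ∀ a : B, ¬ D.s0.SameCycle a (D.s1 a)) :
    ∀ S : Finset (Finset B), S ⊆ D.toRG.edges → S.Nonempty →
      cyc (piPerm D S) + 2 ≤ cyc D.s0 + S.card := by
  intro S
  induction S using Finset.strongInduction with
  | _ S ih =>
    intro hS hne
    obtain ⟨e, he⟩ := hne
    have he' : e ∈ D.toRG.edges := hS he
    have hsub : S.erase e ⊆ D.toRG.edges := (Finset.erase_subset _ _).trans hS
    obtain ⟨a, hne_a, hpi⟩ := piPerm_insert D hsub he' (Finset.notMem_erase _ _)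
    have hins : insert e (S.erase e) = S := Finset.insert_erase he
    have hcyc : cyc (piPerm D S) = cyc (piPerm D (S.erase e) * Equiv.swap a (D.s1 a)) := by
      conv_lhs => rw [← hins]
      rw [hpi]
    rcases Finset.eq_empty_or_nonempty (S.erase e) with hemp | hne'
    · have hcard : S.card = 1 := by
        have h := hins
        rw [hemp] at h
        rw [← h]
        simp
      have h1 : cyc (D.s0 * Equiv.swap a (D.s1 a)) + 1 ≤ cyc D.s0 :=
        cyc_mul_swap_lt hne_a (hL a)
      rw [hcyc, hemp, piPerm_empty, hcard]
      omega
    · have hstep : cyc (piPerm D (S.erase e) * Equiv.swap a (D.s1 a)) ≤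
          cyc (piPerm D (S.erase e)) + 1 := cyc_mul_swap_le hne_a
      have hih := ih (S.erase e) (Finset.erase_ssubset he) hsub hne'
      have hcard : (S.erase e).card = S.card - 1 := Finset.card_erase_of_mem he
      have hpos : 1 ≤ S.card := Finset.card_pos.mpr ⟨e, he⟩
      rw [hcyc]
      omega

lemma lDelta_pow (k : ℕ) :
    ((RG.lDelta ^ k).coeff (2 * (k : ℤ)) = (-1) ^ k) ∧
      ∀ d : ℤ, 2 * (k : ℤ) < d → (RG.lDelta ^ k).coeff d = 0 := by
  induction k with
  | zero =>
    constructor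
    · show (1 : LaurentPolynomial ℤ).coeff (2 * ((0 : ℕ) : ℤ)) = 1
      rw [← LaurentPolynomial.T_zero, LaurentPolynomial.T_apply, if_pos (by norm_num)]
    · intro d hd
      show (1 : LaurentPolynomial ℤ).coeff d = 0
      rw [← LaurentPolynomial.T_zero, LaurentPolynomial.T_apply, if_neg (by push_cast at hd ⊢; omega)]
  | succ k ih =>
    have happ : ∀ d : ℤ, (RG.lDelta ^ (k + 1)).coeff d =
        -((RG.lDelta ^ k).coeff (d - 2)) - (RG.lDelta ^ k).coeff (d + 2) := by
      intro d
      have hexp : RG.lDelta ^ (k + 1) =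
          -(RG.lDelta ^ k * LaurentPolynomial.T 2) -
            RG.lDelta ^ k * LaurentPolynomial.T (-2) := by
        rw [pow_succ, RG.lDelta]
        ring
      rw [hexp]
      rw [AddMonoidAlgebra.coeff_sub, AddMonoidAlgebra.coeff_neg, Finsupp.sub_apply, Finsupp.neg_apply]
      have hT : ∀ n : ℤ, (LaurentPolynomial.T n : LaurentPolynomial ℤ) =
          AddMonoidAlgebra.single n 1 := fun n => rfl
      rw [hT, hT, AddMonoidAlgebra.coeff_mul_single_apply, AddMonoidAlgebra.coeff_mul_single_apply,
        mul_one, mul_one]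
      have h1 : d + - -2 = d + 2 := by ring
      rw [h1, ← sub_eq_add_neg]
    constructor
    · rw [happ]
      have h1 : 2 * ((k : ℤ) + 1) - 2 = 2 * (k : ℤ) := by ring
      push_cast
      rw [h1, ih.1, ih.2 (2 * ((k : ℤ) + 1) + 2) (by omega)]
      ring
    · intro d hd
      push_cast at hd
      rw [happ, ih.2 _ (by omega), ih.2 _ (by omega)]
      ring

end AuxProof

/-- For a connected ribbon graph, every exponent of `A` occurring in `⟨𝔻⟩`
is at most `e(𝔻) + 2v(𝔻) − 2`; if no edge is a loop (the A-adequate case), the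
coefficient of `A^{e(𝔻) + 2v(𝔻) − 2}` is nonzero, so the maximal exponent equals
`e(𝔻) + 2v(𝔻) − 2`. -/
theorem bracket_max_exponent [Nonempty B] (D : RibbonGraph B) (hc : D.Connected) :
    (∀ d ∈ D.toRG.bracket.coeff.support, d ≤ (D.toRG.numE : ℤ) + 2 * D.toRG.numV - 2) ∧
    ((∀ a : B, ¬ D.toRG.IsLoop a) →
      ((D.toRG.numE : ℤ) + 2 * D.toRG.numV - 2) ∈ D.toRG.bracket.coeff.support) := by
  classical
  have hV : D.toRG.numV = cyc D.s0 := rfl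
  have hV1 : 1 ≤ cyc D.s0 := one_le_cyc _
  have hfpos : ∀ S : Finset (Finset B), 1 ≤ (D.toRG.spanning S).numF := by
    intro S
    rw [numF_spanning]
    exact one_le_cyc _
  have hterm : ∀ (S : Finset (Finset B)) (d : ℤ),
      ((LaurentPolynomial.T ((D.toRG.numE : ℤ) - 2 * S.card) *
        RG.lDelta ^ ((D.toRG.spanning S).numF - 1) : LaurentPolynomial ℤ)).coeff d =
      (RG.lDelta ^ ((D.toRG.spanning S).numF - 1)).coeff
        (d - ((D.toRG.numE : ℤ) - 2 * S.card)) := by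
    intro S d
    have hT : (LaurentPolynomial.T ((D.toRG.numE : ℤ) - 2 * S.card) : LaurentPolynomial ℤ) =
        AddMonoidAlgebra.single ((D.toRG.numE : ℤ) - 2 * S.card) 1 := rfl
    rw [hT, AddMonoidAlgebra.coeff_single_mul_apply, one_mul]
    congr 1
    ring
  have hsum : ∀ d : ℤ, D.toRG.bracket.coeff d =
      ∑ S ∈ D.toRG.edges.powerset,
        ((LaurentPolynomial.T ((D.toRG.numE : ℤ) - 2 * S.card) *
          RG.lDelta ^ ((D.toRG.spanning S).numF - 1) : LaurentPolynomial ℤ)).coeff d := by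
    intro d
    rw [RG.bracket, AddMonoidAlgebra.coeff_sum]
    exact Finsupp.finset_sum_apply _ _ _
  constructor
  · intro d hd
    rw [Finsupp.mem_support_iff, hsum] at hd
    obtain ⟨S, hSmem, hSne⟩ := Finset.exists_ne_zero_of_sum_ne_zero hd
    rw [hterm] at hSne
    have hle : ¬ (2 * (((D.toRG.spanning S).numF - 1 : ℕ) : ℤ) <
        d - ((D.toRG.numE : ℤ) - 2 * S.card)) := fun hlt =>
      hSne ((lDelta_pow _).2 _ hlt)
    push_neg at hle
    have hf := hfpos S
    have hbound : (D.toRG.spanning S).numF ≤ cyc D.s0 + S.card := by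
      rw [numF_spanning]
      exact cyc_piPerm_le D S (Finset.mem_powerset.mp hSmem)
    rw [hV]
    omega
  · intro hL
    have hL' : ∀ a : B, ¬ D.s0.SameCycle a (D.s1 a) := hL
    rw [Finsupp.mem_support_iff, hsum]
    have hzero : ∀ S ∈ D.toRG.edges.powerset, S ≠ ∅ →
        ((LaurentPolynomial.T ((D.toRG.numE : ℤ) - 2 * S.card) *
          RG.lDelta ^ ((D.toRG.spanning S).numF - 1) : LaurentPolynomial ℤ)).coeff
          ((D.toRG.numE : ℤ) + 2 * D.toRG.numV - 2) = 0 := by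
      intro S hSmem hSne0
      have hne : S.Nonempty := Finset.nonempty_iff_ne_empty.mpr hSne0
      have hstrict : cyc (piPerm D S) + 2 ≤ cyc D.s0 + S.card :=
        cyc_piPerm_lt D hL' S (Finset.mem_powerset.mp hSmem) hne
      rw [hterm]
      apply (lDelta_pow _).2
      have hf := hfpos S
      have hfe : (D.toRG.spanning S).numF = cyc (piPerm D S) := numF_spanning D S
      have hcard : 1 ≤ S.card := Finset.card_pos.mpr hne
      rw [hV]
      omega
    rw [Finset.sum_eq_single_of_mem ∅
      (Finset.mem_powerset.mpr (Finset.empty_subset _)) hzero]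
    rw [hterm]
    have hf0 : (D.toRG.spanning ∅).numF = cyc D.s0 := by
      rw [numF_spanning, piPerm_empty]
    have harg : ((D.toRG.numE : ℤ) + 2 * D.toRG.numV - 2) -
        ((D.toRG.numE : ℤ) - 2 * ((∅ : Finset (Finset B)).card : ℤ)) =
        2 * ((((D.toRG.spanning ∅).numF - 1 : ℕ)) : ℤ) := by
      rw [hf0, hV]
      simp only [Finset.card_empty, Nat.cast_zero]
      omega
    rw [harg, (lDelta_pow _).1]
    exact pow_ne_zero _ (by norm_num)
end

section
/- Let 𝔻 be a connected oriented ribbon graph. Then every exponent d of A occurring with nonzero coefficient in ⟨𝔻⟩ satisfies d ≥ 2 − e(𝔻) − 2f(𝔻). If moreover no edge {a, b} of 𝔻 has a and b in the same σ₂-orbit (i.e., the dual ribbon graph has no loops), then the coefficient of A^{2 − e(𝔻) − 2f(𝔻)} in ⟨𝔻⟩ is nonzero, so the minimal exponent of ⟨𝔻⟩ equals 2 − e(𝔻) − 2f(𝔻). -/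
open Equiv Finset

variable {B : Type} [Fintype B] [DecidableEq B]

namespace BMin

set_option linter.unusedSectionVars false
set_option linter.unnecessarySimpa false
set_option linter.unusedVariables false
set_option linter.unusedTactic false

variable {B : Type} [Fintype B] [DecidableEq B]

/-- Reachability by nonnegative powers of a permutation. -/
def Reach (σ : Equiv.Perm B) (a b : B) : Prop := ∃ n : ℕ, (σ ^ n) a = b

lemma reach_refl (σ : Perm B) (a : B) : Reach σ a a := ⟨0, rfl⟩

lemma reach_apply (σ : Perm B) (a : B) : Reach σ a (σ a) := ⟨1, by simp⟩

lemma reach_trans {σ : Perm B} {a b c : B} (h1 : Reach σ a b) (h2 : Reach σ b c) :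
    Reach σ a c := by
  obtain ⟨m, rfl⟩ := h1; obtain ⟨n, rfl⟩ := h2
  exact ⟨n + m, by rw [pow_add, Perm.mul_apply]⟩

lemma reach_symm {σ : Perm B} {a b : B} (h : Reach σ a b) : Reach σ b a := by
  obtain ⟨n, rfl⟩ := h
  refine ⟨n * (orderOf σ - 1), ?_⟩
  have h1 : 1 ≤ orderOf σ := orderOf_pos σ
  have hmn : n * (orderOf σ - 1) + n = n * orderOf σ := by
    have : orderOf σ - 1 + 1 = orderOf σ := Nat.sub_add_cancel h1
    calc n * (orderOf σ - 1) + n = n * (orderOf σ - 1 + 1) := by ring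
    _ = n * orderOf σ := by rw [this]
  have : (σ ^ (n * (orderOf σ - 1))) ((σ ^ n) a) = (σ ^ (n * orderOf σ)) a := by
    rw [← Perm.mul_apply, ← pow_add, hmn]
  rw [this, mul_comm, pow_mul, pow_orderOf_eq_one, one_pow, Perm.one_apply]

lemma quot_mk_eq_iff (σ : Perm B) (x y : B) :
    Quot.mk (fun a b => σ a = b) x = Quot.mk (fun a b => σ a = b) y ↔ Reach σ x y := by
  rw [Quot.eq]
  constructor
  · intro h
    induction h with
    | rel a b hab => exact hab ▸ reach_apply σ a
    | refl a => exact reach_refl σ a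
    | symm a b _ ih => exact reach_symm ih
    | trans a b c _ _ ih1 ih2 => exact reach_trans ih1 ih2
  · rintro ⟨n, rfl⟩
    induction n with
    | zero => exact Relation.EqvGen.refl x
    | succ n ih =>
        refine Relation.EqvGen.trans _ _ _ ih (Relation.EqvGen.rel _ _ ?_)
        rw [← Perm.mul_apply, ← pow_succ']

/-- The number of cycles (orbits, including fixed points) of a permutation. -/
noncomputable def cyc (σ : Perm B) : ℕ := Nat.card (Quot (fun a b => σ a = b))

lemma quot_congr {α : Type} {r s : α → α → Prop}
    (h : ∀ x y, Relation.EqvGen r x y ↔ Relation.EqvGen s x y) :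
    Nat.card (Quot r) = Nat.card (Quot s) := by
  refine Nat.card_congr ⟨Quot.lift (Quot.mk s) ?_, Quot.lift (Quot.mk r) ?_, ?_, ?_⟩
  · intro a b hab
    exact Quot.eqvGen_sound ((h a b).1 (Relation.EqvGen.rel a b hab))
  · intro a b hab
    exact Quot.eqvGen_sound ((h a b).2 (Relation.EqvGen.rel a b hab))
  · intro x; induction x using Quot.ind; rfl
  · intro x; induction x using Quot.ind; rfl

lemma card_add_card_compl {Q : Type} [Finite Q] (p : Q → Prop) :
    Nat.card {x // p x} + Nat.card {x // ¬ p x} = Nat.card Q := by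
  classical
  cases nonempty_fintype Q
  simp only [Nat.card_eq_fintype_card]
  rw [Fintype.card_subtype_compl]
  have := Fintype.card_subtype_le p
  omega

lemma card_compl_singleton {Q : Type} [Finite Q] (c : Q) :
    Nat.card {x : Q // x ≠ c} + 1 = Nat.card Q := by
  classical
  have h1 : Nat.card {x : Q // x = c} = 1 := by
    haveI : Unique {x : Q // x = c} := ⟨⟨⟨c, rfl⟩⟩, by rintro ⟨x, rfl⟩; rfl⟩
    exact Nat.card_unique
  have h2 := card_add_card_compl (fun x : Q => x = c)
  simp only [ne_eq]
  omega


lemma pow_succ_apply (g : Perm B) (n : ℕ) (x : B) : (g ^ (n + 1)) x = g ((g ^ n) x) := by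
  rw [pow_succ', Perm.mul_apply]

lemma merge_chain (π : Perm B) (a b : B) (hn : ¬ Reach π a b) :
    Reach (π * Equiv.swap a b) b a ∧ Reach (π * Equiv.swap a b) b (π a) := by
  set ρ := π * Equiv.swap a b with hρ
  have hρb : ρ b = π a := by
    simp [hρ, Perm.mul_apply, Equiv.swap_apply_right]
  have hper : ∃ m : ℕ, 0 < m ∧ (π ^ m) a = a :=
    ⟨orderOf π, orderOf_pos π, by rw [pow_orderOf_eq_one]; rfl⟩
  have hk0 : 0 < Nat.find hper := (Nat.find_spec hper).1
  have hka : (π ^ Nat.find hper) a = a := (Nat.find_spec hper).2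
  set k := Nat.find hper with hk
  have key : ∀ j, 1 ≤ j → j ≤ k → (ρ ^ j) b = (π ^ j) a := by
    intro j
    induction j with
    | zero => omega
    | succ j ih =>
      intro _ h2
      rcases Nat.eq_zero_or_pos j with hj | hj
      · subst hj; simpa using hρb
      · have hjk : j < k := by omega
        have hja : (π ^ j) a ≠ a := by
          intro h
          exact (Nat.find_min hper hjk) ⟨hj, h⟩
        have hjb : (π ^ j) a ≠ b := fun h => hn ⟨j, h⟩
        rw [pow_succ_apply, ih hj (by omega), hρ, Perm.mul_apply,
          Equiv.swap_apply_of_ne_of_ne hja hjb, ← pow_succ_apply]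
  refine ⟨⟨k, by rw [key k hk0 le_rfl, hka]⟩, ⟨1, by simpa using hρb⟩⟩

lemma reach_mul_swap_of_reach (π : Perm B) (a b : B) (hn : ¬ Reach π a b) :
    ∀ x y, Reach π x y → Reach (π * Equiv.swap a b) x y := by
  set ρ := π * Equiv.swap a b with hρ
  obtain ⟨hba, hbpa⟩ := merge_chain π a b hn
  have hρa : ρ a = π b := by simp [hρ, Perm.mul_apply, Equiv.swap_apply_left]
  have step : ∀ x, Reach ρ x (π x) := by
    intro x
    by_cases hxa : x = a
    · subst hxa
      exact reach_trans (reach_symm hba) hbpa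
    · by_cases hxb : x = b
      · subst hxb
        exact reach_trans hba (hρa ▸ reach_apply ρ a)
      · have : ρ x = π x := by
          simp [hρ, Perm.mul_apply, Equiv.swap_apply_of_ne_of_ne hxa hxb]
        exact this ▸ reach_apply ρ x
  rintro x y ⟨n, rfl⟩
  induction n with
  | zero => exact reach_refl ρ x
  | succ n ih =>
    rw [pow_succ_apply]
    exact reach_trans ih (step _)

lemma cyc_mul_swap_of_not_reach (π : Perm B) {a b : B} (hn : ¬ Reach π a b) :
    Reach (π * Equiv.swap a b) a b ∧ cyc (π * Equiv.swap a b) + 1 = cyc π := by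
  classical
  set ρ := π * Equiv.swap a b with hρ
  obtain ⟨hba, hbpa⟩ := merge_chain π a b hn
  refine ⟨reach_symm hba, ?_⟩
  have hρa : ρ a = π b := by simp [hρ, Perm.mul_apply, Equiv.swap_apply_left]
  have hρb : ρ b = π a := by simp [hρ, Perm.mul_apply, Equiv.swap_apply_right]
  -- the map to classes of π different from that of b
  have hane : Quot.mk (fun u v => π u = v) a ≠ Quot.mk (fun u v => π u = v) b :=
    fun h => hn ((quot_mk_eq_iff π a b).1 h)
  set T := {C : Quot (fun u v : B => π u = v) // C ≠ Quot.mk (fun u v => π u = v) b} with hT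
  have hmkne : ∀ x, ¬ Reach π x b →
      Quot.mk (fun u v : B => π u = v) x ≠ Quot.mk (fun u v => π u = v) b :=
    fun x hx h => hx ((quot_mk_eq_iff π x b).1 h)
  set h0 : B → T := fun x =>
    if hx : Reach π x b then ⟨Quot.mk _ a, hane⟩ else ⟨Quot.mk _ x, hmkne x hx⟩ with hh0
  have hinv : ∀ x, h0 (ρ x) = h0 x := by
    intro x
    by_cases hxa : x = a
    · rw [hxa, hρa]
      have h1 : Reach π (π b) b := reach_symm (reach_apply π b)
      rw [hh0]
      simp only [dif_pos h1, dif_neg hn]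
    · by_cases hxb : x = b
      · rw [hxb, hρb]
        have h1 : ¬ Reach π (π a) b := fun h => hn (reach_trans (reach_apply π a) h)
        have h2 : Reach π b b := reach_refl π b
        rw [hh0]
        simp only [dif_neg h1, dif_pos h2]
        exact Subtype.ext ((quot_mk_eq_iff π _ _).2 (reach_symm (reach_apply π a)))
      · have hx : ρ x = π x := by
          simp [hρ, Perm.mul_apply, Equiv.swap_apply_of_ne_of_ne hxa hxb]
        rw [hx]
        by_cases hr : Reach π x b
        · have hr2 : Reach π (π x) b := reach_trans (reach_symm (reach_apply π x)) hr
          rw [hh0]; simp only [dif_pos hr, dif_pos hr2]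
        · have hr2 : ¬ Reach π (π x) b := fun h => hr (reach_trans (reach_apply π x) h)
          rw [hh0]; simp only [dif_neg hr, dif_neg hr2]
          exact Subtype.ext ((quot_mk_eq_iff π _ _).2 (reach_symm (reach_apply π x)))
  set hbar : Quot (fun u v : B => ρ u = v) → T :=
    Quot.lift h0 (fun x y (hxy : ρ x = y) => by rw [← hxy, hinv x]) with hhbar
  set gbar : Quot (fun u v : B => π u = v) → Quot (fun u v : B => ρ u = v) :=
    Quot.lift (Quot.mk _) (fun x y (hxy : π x = y) =>
      (quot_mk_eq_iff ρ x y).2 (reach_mul_swap_of_reach π a b hn x y ⟨1, by simpa using hxy⟩))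
    with hgbar
  have hleft : ∀ X, gbar (hbar X).1 = X := by
    intro X
    induction X using Quot.ind with
    | _ x =>
      by_cases hr : Reach π x b
      · have : hbar (Quot.mk _ x) = ⟨Quot.mk _ a, hane⟩ := by
          rw [hhbar]; show h0 x = _; rw [hh0]; simp only [dif_pos hr]
        rw [this]
        show Quot.mk _ a = Quot.mk _ x
        refine (quot_mk_eq_iff ρ a x).2 (reach_symm ?_)
        exact reach_trans (reach_mul_swap_of_reach π a b hn x b hr) hba
      · have : hbar (Quot.mk _ x) = ⟨Quot.mk _ x, hmkne x hr⟩ := by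
          rw [hhbar]; show h0 x = _; rw [hh0]; simp only [dif_neg hr]
        rw [this]
  have hright : ∀ C : T, hbar (gbar C.1) = C := by
    rintro ⟨X, hX⟩
    obtain ⟨x, rfl⟩ := Quot.exists_rep X
    have hr : ¬ Reach π x b := fun h => hX ((quot_mk_eq_iff π x b).2 h)
    show hbar (gbar (Quot.mk (fun u v => π u = v) x)) = ⟨Quot.mk (fun u v => π u = v) x, hX⟩
    rw [hgbar, hhbar]
    show h0 x = (⟨Quot.mk (fun u v => π u = v) x, hX⟩ : T)
    rw [hh0]
    simp only [dif_neg hr]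
  have : Nat.card (Quot (fun u v : B => ρ u = v)) = Nat.card T :=
    Nat.card_congr ⟨hbar, fun C => gbar C.1, hleft, hright⟩
  show Nat.card (Quot (fun u v : B => ρ u = v)) + 1 = Nat.card (Quot (fun u v : B => π u = v))
  rw [this, hT]
  exact card_compl_singleton _

lemma not_reach_mul_swap (π : Perm B) {a b : B} (hab : a ≠ b) (hs : Reach π a b) :
    ¬ Reach (π * Equiv.swap a b) a b := by
  set ρ := π * Equiv.swap a b with hρ
  have hper : ∃ m : ℕ, 0 < m ∧ (π ^ m) a = a :=
    ⟨orderOf π, orderOf_pos π, by rw [pow_orderOf_eq_one]; rfl⟩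
  have hk0 : 0 < Nat.find hper := (Nat.find_spec hper).1
  have hka : (π ^ Nat.find hper) a = a := (Nat.find_spec hper).2
  set k := Nat.find hper with hk
  have hex : ∃ m : ℕ, 0 < m ∧ (π ^ m) a = b := by
    obtain ⟨n, hn⟩ := hs
    have : n ≠ 0 := by rintro rfl; exact hab hn
    exact ⟨n, Nat.pos_of_ne_zero this, hn⟩
  have hm0 : 0 < Nat.find hex := (Nat.find_spec hex).1
  have hmb : (π ^ Nat.find hex) a = b := (Nat.find_spec hex).2
  set m := Nat.find hex with hm
  have hmk : m < k := by
    by_contra h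
    push_neg at h
    have h1 : (π ^ (m - k)) a = b := by
      have : (π ^ (m - k)) ((π ^ k) a) = (π ^ m) a := by
        rw [← Perm.mul_apply, ← pow_add, Nat.sub_add_cancel h]
      rw [hka] at this; rw [this, hmb]
    have h2 : m - k < m := by omega
    have h3 := Nat.find_min hex h2
    push_neg at h3
    rcases Nat.eq_zero_or_pos (m - k) with h4 | h4
    · rw [h4] at h1; exact hab h1
    · exact absurd h1 (by intro hh; exact absurd hh (by
        intro hhh
        exact absurd hhh (fun _ => (h3 h4) hhh)))
  set Q : B → Prop := fun x => ∃ i, m < i ∧ i ≤ k ∧ (π ^ i) a = x with hQ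
  have hcancel : ∀ i j, j ≤ i → (π ^ i) a = (π ^ j) a → (π ^ (i - j)) a = a := by
    intro i j hji hij
    have : (π ^ j) ((π ^ (i - j)) a) = (π ^ j) a := by
      rw [← Perm.mul_apply, ← pow_add, Nat.add_sub_cancel' hji, hij]
    exact (π ^ j).injective this
  have hbQ : ¬ Q b := by
    rintro ⟨i, h1, h2, h3⟩
    have : (π ^ (i - m)) a = a := hcancel i m (le_of_lt h1) (by rw [h3, hmb])
    exact Nat.find_min hper (by omega) ⟨by omega, this⟩
  have haQ : Q a := ⟨k, hmk, le_rfl, hka⟩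
  have hstep : ∀ x, Q x → Q (ρ x) := by
    rintro x ⟨i, h1, h2, h3⟩
    by_cases hik : i = k
    · have hxa : x = a := by rw [← h3, hik, hka]
      have hval : ρ x = (π ^ (m + 1)) a := by
        have h5 : ρ a = π b := by rw [hρ, Perm.mul_apply, Equiv.swap_apply_left]
        rw [hxa, h5, ← hmb, ← pow_succ_apply]
      exact ⟨m + 1, by omega, by omega, hval.symm⟩
    · have hik' : i < k := lt_of_le_of_ne h2 hik
      have hxa : x ≠ a := by
        rintro rfl
        exact Nat.find_min hper hik' ⟨by omega, h3⟩
      have hxb : x ≠ b := fun h => hbQ (h ▸ ⟨i, h1, h2, h3⟩)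
      have hval : ρ x = (π ^ (i + 1)) a := by
        rw [hρ, Perm.mul_apply, Equiv.swap_apply_of_ne_of_ne hxa hxb, ← h3,
          ← pow_succ_apply]
      exact ⟨i + 1, by omega, by omega, hval.symm⟩
  have hall : ∀ n : ℕ, Q ((ρ ^ n) a) := by
    intro n
    induction n with
    | zero => simpa using haQ
    | succ n ih =>
      rw [pow_succ_apply]
      exact hstep _ ih
  rintro ⟨n, hn⟩
  exact hbQ (hn ▸ hall n)

lemma cyc_mul_swap_of_reach (π : Perm B) {a b : B} (hab : a ≠ b) (hs : Reach π a b) :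
    cyc (π * Equiv.swap a b) = cyc π + 1 := by
  have hnr := not_reach_mul_swap π hab hs
  have h2 := (cyc_mul_swap_of_not_reach (π * Equiv.swap a b) hnr).2
  rw [mul_assoc, Equiv.swap_mul_self, mul_one] at h2
  omega


lemma firstRet_spec (σ : Perm B) (P : Finset B) (b : ↥P) :
    ∃ m : ℕ, 0 < m ∧ (σ ^ m) (b : B) ∈ P ∧ (firstRet σ P b : B) = (σ ^ m) (b : B) ∧
      ∀ j, 0 < j → j < m → (σ ^ j) (b : B) ∉ P := by
  have h : ∃ m, 0 < m ∧ (σ ^ m) (b : B) ∈ P :=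
    ⟨orderOf σ, orderOf_pos σ, by rw [pow_orderOf_eq_one]; simpa using b.2⟩
  refine ⟨Nat.find h, (Nat.find_spec h).1, (Nat.find_spec h).2, rfl, ?_⟩
  intro j hj0 hjm hmem
  exact Nat.find_min h hjm ⟨hj0, hmem⟩

lemma firstRet_orbit (σ : Perm B) (P : Finset B) :
    ∀ n : ℕ, ∀ a b : ↥P, (σ ^ n) (a : B) = b → ∃ k, (firstRet σ P)^[k] a = b := by
  intro n
  induction n using Nat.strong_induction_on with
  | _ n ih =>
    intro a b hab
    rcases Nat.eq_zero_or_pos n with hn | hn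
    · subst hn
      exact ⟨0, Subtype.ext (by simpa using hab)⟩
    · obtain ⟨m, hm0, hmem, hval, hmin⟩ := firstRet_spec σ P a
      have hmn : m ≤ n := by
        by_contra hcon
        push_neg at hcon
        exact hmin n hn hcon (hab ▸ b.2)
      have hstep : (σ ^ (n - m)) ((firstRet σ P a : ↥P) : B) = b := by
        rw [hval, ← Perm.mul_apply, ← pow_add, Nat.sub_add_cancel hmn, hab]
      rcases Nat.eq_zero_or_pos (n - m) with h0 | _
      · exact ⟨1, by
          rw [Function.iterate_one]
          exact Subtype.ext (by rw [← hstep, h0, pow_zero, Perm.one_apply])⟩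
      · obtain ⟨k, hk⟩ := ih (n - m) (by omega) (firstRet σ P a) b hstep
        exact ⟨k + 1, by rw [Function.iterate_succ_apply, hk]⟩

lemma quot_mk_iterate {α : Type} (f : α → α) :
    ∀ (k : ℕ) (a : α), Quot.mk (fun x y => f x = y) a = Quot.mk (fun x y => f x = y) (f^[k] a) := by
  intro k
  induction k with
  | zero => intro a; rfl
  | succ k ih =>
    intro a
    rw [Function.iterate_succ_apply]
    have h1 : Quot.mk (fun x y => f x = y) a = Quot.mk (fun x y => f x = y) (f a) :=
      Quot.sound rfl
    exact h1.trans (ih (f a))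

lemma card_quot_firstRet (σ : Perm B) (P : Finset B) :
    Nat.card (Quot (fun a b : ↥P => firstRet σ P a = b)) =
      Nat.card {x : Quot (fun a b : B => σ a = b) //
        ∃ a, Quot.mk (fun a b : B => σ a = b) a = x ∧ a ∈ P} := by
  have hwd : ∀ a b : ↥P, firstRet σ P a = b →
      Quot.mk (fun a b : B => σ a = b) (a : B) = Quot.mk (fun a b : B => σ a = b) (b : B) := by
    intro a b hab
    obtain ⟨m, hm0, hmem, hval, hmin⟩ := firstRet_spec σ P a
    refine (quot_mk_eq_iff σ (a : B) (b : B)).2 ⟨m, ?_⟩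
    rw [← hval, hab]
  refine Nat.card_congr (Equiv.ofBijective
    (Quot.lift (fun a : ↥P => (⟨Quot.mk _ (a : B), ⟨(a : B), rfl, a.2⟩⟩ :
      {x : Quot (fun a b : B => σ a = b) // ∃ a, Quot.mk (fun a b : B => σ a = b) a = x ∧ a ∈ P}))
      (fun a b hab => Subtype.ext (hwd a b hab)) ) ⟨?_, ?_⟩)
  · intro X Y
    induction X using Quot.ind with
    | _ a =>
    induction Y using Quot.ind with
    | _ b =>
    intro hEq
    have h1 : Quot.mk (fun a b : B => σ a = b) (a : B) = Quot.mk (fun a b : B => σ a = b) (b : B) :=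
      congrArg Subtype.val hEq
    obtain ⟨n, hn⟩ := (quot_mk_eq_iff σ (a : B) (b : B)).1 h1
    obtain ⟨k, hk⟩ := firstRet_orbit σ P n a b hn
    rw [quot_mk_iterate (firstRet σ P) k a, hk]
  · rintro ⟨x, a, rfl, ha⟩
    exact ⟨Quot.mk _ (⟨a, ha⟩ : ↥P), Subtype.ext rfl⟩

lemma card_quot_isolated_congr {α : Type} [Nonempty α] (r s : α → α → Prop) (P : α → Prop)
    (hrs : ∀ a, (∀ x, Relation.EqvGen r a x → ¬ P x) →
      ∀ b, (Relation.EqvGen r a b ↔ Relation.EqvGen s a b))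
    (hsr : ∀ a, (∀ x, Relation.EqvGen s a x → ¬ P x) →
      ∀ b, (Relation.EqvGen s a b ↔ Relation.EqvGen r a b)) :
    Nat.card {x : Quot r // ∀ a, Quot.mk r a = x → ¬ P a} =
      Nat.card {x : Quot s // ∀ a, Quot.mk s a = x → ¬ P a} := by
  classical
  set DisR : α → Prop := fun a => ∀ x, Relation.EqvGen r a x → ¬ P x with hDisR
  set DisS : α → Prop := fun a => ∀ x, Relation.EqvGen s a x → ¬ P x with hDisS
  have hRS : ∀ a, DisR a → DisS a := by
    intro a ha x hsx
    exact ha x ((hrs a ha x).2 hsx)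
  have hSR : ∀ a, DisS a → DisR a := by
    intro a ha x hrx
    exact ha x ((hsr a ha x).2 hrx)
  have condR_mk : ∀ a : α, (∀ y, Quot.mk r y = Quot.mk r a → ¬ P y) ↔ DisR a := by
    intro a
    constructor
    · intro h x hx
      exact h x (Quot.eqvGen_sound (Relation.EqvGen.symm _ _ hx))
    · intro h y hy
      exact h y (Relation.EqvGen.symm _ _ (Quot.eq.1 hy))
  have condS_mk : ∀ a : α, (∀ y, Quot.mk s y = Quot.mk s a → ¬ P y) ↔ DisS a := by
    intro a
    constructor
    · intro h x hx
      exact h x (Quot.eqvGen_sound (Relation.EqvGen.symm _ _ hx))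
    · intro h y hy
      exact h y (Relation.EqvGen.symm _ _ (Quot.eq.1 hy))
  have hDisR_inv : ∀ a b, Relation.EqvGen r a b → (DisR a ↔ DisR b) := by
    intro a b hab
    constructor
    · intro h x hx; exact h x (Relation.EqvGen.trans _ _ _ hab hx)
    · intro h x hx; exact h x (Relation.EqvGen.trans _ _ _ (Relation.EqvGen.symm _ _ hab) hx)
  have hDisS_inv : ∀ a b, Relation.EqvGen s a b → (DisS a ↔ DisS b) := by
    intro a b hab
    constructor
    · intro h x hx; exact h x (Relation.EqvGen.trans _ _ _ hab hx)
    · intro h x hx; exact h x (Relation.EqvGen.trans _ _ _ (Relation.EqvGen.symm _ _ hab) hx)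
  set d : α := Classical.arbitrary α with hd
  set f : α → Quot s := fun a => if DisR a then Quot.mk s a else Quot.mk s d with hf
  set g : α → Quot r := fun a => if DisS a then Quot.mk r a else Quot.mk r d with hg
  have hfinv : ∀ a b, r a b → f a = f b := by
    intro a b hab
    have hiff := hDisR_inv a b (Relation.EqvGen.rel _ _ hab)
    by_cases h : DisR a
    · rw [hf]
      simp only [if_pos h, if_pos (hiff.1 h)]
      exact Quot.eqvGen_sound ((hrs a h b).1 (Relation.EqvGen.rel _ _ hab))
    · rw [hf]
      simp only [if_neg h, if_neg (fun hb => h (hiff.2 hb))]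
  have hginv : ∀ a b, s a b → g a = g b := by
    intro a b hab
    have hiff := hDisS_inv a b (Relation.EqvGen.rel _ _ hab)
    by_cases h : DisS a
    · rw [hg]
      simp only [if_pos h, if_pos (hiff.1 h)]
      exact Quot.eqvGen_sound ((hsr a h b).1 (Relation.EqvGen.rel _ _ hab))
    · rw [hg]
      simp only [if_neg h, if_neg (fun hb => h (hiff.2 hb))]
  set fbar : Quot r → Quot s := Quot.lift f hfinv with hfbar
  set gbar : Quot s → Quot r := Quot.lift g hginv with hgbar
  have keyf : ∀ a, DisR a → fbar (Quot.mk r a) = Quot.mk s a := by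
    intro a h
    rw [hfbar]
    show f a = _
    rw [hf]
    simp only [if_pos h]
  have keyg : ∀ a, DisS a → gbar (Quot.mk s a) = Quot.mk r a := by
    intro a h
    rw [hgbar]
    show g a = _
    rw [hg]
    simp only [if_pos h]
  have hcondf : ∀ (X : Quot r), (∀ a, Quot.mk r a = X → ¬ P a) →
      (∀ b, Quot.mk s b = fbar X → ¬ P b) := by
    intro X
    induction X using Quot.ind with
    | _ a0 =>
      intro hX b hb
      have hDa : DisR a0 := (condR_mk a0).1 hX
      rw [keyf a0 hDa] at hb
      have : Relation.EqvGen s a0 b := Relation.EqvGen.symm _ _ (Quot.eq.1 hb)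
      exact hDa b ((hrs a0 hDa b).2 this)
  have hcondg : ∀ (X : Quot s), (∀ a, Quot.mk s a = X → ¬ P a) →
      (∀ b, Quot.mk r b = gbar X → ¬ P b) := by
    intro X
    induction X using Quot.ind with
    | _ a0 =>
      intro hX b hb
      have hDa : DisS a0 := (condS_mk a0).1 hX
      rw [keyg a0 hDa] at hb
      have : Relation.EqvGen r a0 b := Relation.EqvGen.symm _ _ (Quot.eq.1 hb)
      exact hDa b ((hsr a0 hDa b).2 this)
  refine Nat.card_congr ⟨fun x => ⟨fbar x.1, hcondf x.1 x.2⟩, fun x => ⟨gbar x.1, hcondg x.1 x.2⟩,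
    ?_, ?_⟩
  · rintro ⟨X, hX⟩
    refine Subtype.ext ?_
    show gbar (fbar X) = X
    obtain ⟨a0, rfl⟩ := Quot.exists_rep X
    have hDa : DisR a0 := (condR_mk a0).1 hX
    rw [keyf a0 hDa, keyg a0 (hRS a0 hDa)]
  · rintro ⟨X, hX⟩
    refine Subtype.ext ?_
    show fbar (gbar X) = X
    obtain ⟨a0, rfl⟩ := Quot.exists_rep X
    have hDa : DisS a0 := (condS_mk a0).1 hX
    rw [keyg a0 hDa, keyf a0 (hSR a0 hDa)]

lemma card_quot_split {α : Type} [Finite α] (r : α → α → Prop) (P : α → Prop) :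
    Nat.card (Quot r) = Nat.card {x : Quot r // ∃ a, Quot.mk r a = x ∧ P a}
      + Nat.card {x : Quot r // ∀ a, Quot.mk r a = x → ¬ P a} := by
  classical
  have h1 := card_add_card_compl (fun x : Quot r => ∃ a, Quot.mk r a = x ∧ P a)
  have h2 : Nat.card {x : Quot r // ¬ ∃ a, Quot.mk r a = x ∧ P a} =
      Nat.card {x : Quot r // ∀ a, Quot.mk r a = x → ¬ P a} := by
    refine Nat.card_congr (Equiv.subtypeEquivRight ?_)
    intro x
    push_neg
    rfl
  omega


lemma eqvGen_perm_iff (σ : Perm B) (x y : B) :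
    Relation.EqvGen (fun a b => σ a = b) x y ↔ Reach σ x y := by
  rw [← Quot.eq]
  exact quot_mk_eq_iff σ x y

lemma reach_inv_iff (σ : Perm B) (x y : B) : Reach σ⁻¹ x y ↔ Reach σ x y := by
  constructor
  · rintro ⟨n, rfl⟩
    refine reach_symm ⟨n, ?_⟩
    rw [← Perm.mul_apply, inv_pow, mul_inv_cancel, Perm.one_apply]
  · rintro ⟨n, rfl⟩
    refine reach_symm ⟨n, ?_⟩
    rw [← Perm.mul_apply, inv_pow, inv_mul_cancel, Perm.one_apply]

variable (D : RibbonGraph B)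

/-- σ₁ acting on the active part of the spanning subgraph, identity elsewhere. -/
def tauFun (S : Finset (Finset B)) (x : B) : B :=
  if x ∈ (D.toRG.spanning S).act then D.s1 x else x

lemma tauFun_invol (S : Finset (Finset B)) : Function.Involutive (tauFun D S) := by
  intro x
  unfold tauFun
  by_cases h : x ∈ (D.toRG.spanning S).act
  · have h2 : D.s1 x ∈ (D.toRG.spanning S).act := (D.toRG.spanning S).closed x h
    rw [if_pos h, if_pos h2, D.invol]
  · rw [if_neg h, if_neg h]

def tau (S : Finset (Finset B)) : Perm B := Function.Involutive.toPerm _ (tauFun_invol D S)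

lemma tau_apply (S : Finset (Finset B)) (x : B) : tau D S x = tauFun D S x := rfl

/-- The face permutation of the spanning subgraph, as a permutation of all of `B`. -/
def piS (S : Finset (Finset B)) : Perm B := D.s0 * tau D S

lemma piS_apply_mem (S : Finset (Finset B)) (x : B) (h : x ∈ (D.toRG.spanning S).act) :
    piS D S x = D.s0 (D.s1 x) := by
  show D.s0 (tau D S x) = _
  rw [tau_apply, tauFun, if_pos h]

lemma piS_apply_not_mem (S : Finset (Finset B)) (x : B) (h : x ∉ (D.toRG.spanning S).act) :
    piS D S x = D.s0 x := by
  show D.s0 (tau D S x) = _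
  rw [tau_apply, tauFun, if_neg h]

lemma mem_biUnion_iff (S : Finset (Finset B)) (x : B) :
    x ∈ S.biUnion id ↔ ∃ f ∈ S, x ∈ f := by simp

lemma edgeOf_s1 (a : B) : D.toRG.edgeOf (D.s1 a) = D.toRG.edgeOf a := by
  show ({D.s1 a, D.s1 (D.s1 a)} : Finset B) = {a, D.s1 a}
  rw [D.invol, Finset.pair_comm]

lemma edge_mem_of_mem_biUnion {S : Finset (Finset B)} (hS : S ⊆ D.toRG.edges) {x : B}
    (hx : x ∈ S.biUnion id) : D.toRG.edgeOf x ∈ S := by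
  obtain ⟨f, hfS, hxf⟩ := (mem_biUnion_iff S x).1 hx
  obtain ⟨c, _, rfl⟩ := Finset.mem_image.1 (hS hfS)
  have : x = c ∨ x = D.s1 c := by
    have := hxf
    simp only [RG.edgeOf, Finset.mem_insert, Finset.mem_singleton] at this
    exact this
  rcases this with rfl | rfl
  · exact hfS
  · rw [edgeOf_s1]; exact hfS

lemma s1_mem_biUnion {S : Finset (Finset B)} (hS : S ⊆ D.toRG.edges) {x : B}
    (hx : x ∈ S.biUnion id) : D.s1 x ∈ S.biUnion id := by
  refine (mem_biUnion_iff S (D.s1 x)).2 ⟨D.toRG.edgeOf x, edge_mem_of_mem_biUnion D hS hx, ?_⟩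
  show D.s1 x ∈ ({x, D.s1 x} : Finset B)
  simp

lemma act_spanning {S : Finset (Finset B)} (hS : S ⊆ D.toRG.edges) :
    (D.toRG.spanning S).act = S.biUnion id := by
  ext x
  show x ∈ Finset.univ.filter _ ↔ _
  rw [Finset.mem_filter]
  constructor
  · rintro ⟨_, h1, _⟩; exact h1
  · intro h
    exact ⟨Finset.mem_univ x, h, s1_mem_biUnion D hS h⟩

lemma numF_eq_cyc {S : Finset (Finset B)} (hS : S ⊆ D.toRG.edges) [Nonempty B] :
    (D.toRG.spanning S).numF = cyc (piS D S) := by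
  classical
  set G := D.toRG.spanning S with hG
  set P := G.act with hP
  set π := piS D S with hπ
  -- Step 1: the face map is the first-return map of π to P
  have hret : ∀ a : ↥P, G.ret0 (G.ret1 a) = firstRet π P a := by
    intro a
    obtain ⟨m1, hm10, hm1mem, hm1val, hm1min⟩ := firstRet_spec D.s0 P (G.ret1 a)
    have hval1 : ((G.ret1 a : ↥P) : B) = D.s1 (a : B) := rfl
    -- iterates of π starting from a follow σ₀ applied to σ₁ a
    have hiter : ∀ j, 1 ≤ j → j ≤ m1 → (π ^ j) (a : B) = (D.s0 ^ j) (D.s1 (a : B)) := by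
      intro j
      induction j with
      | zero => omega
      | succ j ih =>
        intro _ h2
        rcases Nat.eq_zero_or_pos j with hj | hj
        · subst hj
          rw [pow_one, pow_one]
          exact piS_apply_mem D S (a : B) a.2
        · have hnot : (D.s0 ^ j) (D.s1 (a : B)) ∉ P := by
            have := hm1min j hj (by omega)
            rw [hval1] at this
            exact this
          rw [pow_succ_apply, ih hj (by omega), pow_succ_apply]
          exact piS_apply_not_mem D S _ hnot
    obtain ⟨m2, hm20, hm2mem, hm2val, hm2min⟩ := firstRet_spec π P a
    have hm1mem' : (D.s0 ^ m1) (D.s1 (a : B)) ∈ P := by rw [← hval1]; exact hm1mem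
    have hle1 : m2 ≤ m1 := by
      by_contra hcon
      push_neg at hcon
      exact hm2min m1 hm10 hcon (by rw [hiter m1 hm10 le_rfl]; exact hm1mem')
    have heq : m2 = m1 := by
      rcases lt_or_eq_of_le hle1 with hlt | he
      · exfalso
        have h1 := hm1min m2 hm20 hlt
        rw [hval1] at h1
        have h2 := hm2mem
        rw [hiter m2 hm20 (le_of_lt hlt)] at h2
        exact h1 h2
      · exact he
    refine Subtype.ext ?_
    show ((firstRet D.s0 P (G.ret1 a) : ↥P) : B) = ((firstRet π P a : ↥P) : B)
    rw [hm2val, hm1val, hval1, heq, hiter m1 hm10 le_rfl]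
  -- rewrite the relation
  have hrel : (fun a b : ↥P => G.ret0 (G.ret1 a) = b) = (fun a b : ↥P => firstRet π P a = b) := by
    funext a b
    rw [hret a]
  have hstep1 : G.numF = Nat.card (Quot (fun a b : ↥P => firstRet π P a = b)) + G.isolated := by
    show orbCount _ + G.isolated = _
    rw [show orbCount (fun a b : ↥P => G.ret0 (G.ret1 a) = b)
      = Nat.card (Quot (fun a b : ↥P => G.ret0 (G.ret1 a) = b)) from rfl, hrel]
  -- Step 4: the isolated count via π instead of σ₀
  have hfix : ∀ x : B, x ∉ P → π x = D.s0 x := fun x h => piS_apply_not_mem D S x h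
  have hiso : G.isolated =
      Nat.card {x : Quot (fun a b : B => π a = b) //
        ∀ a, Quot.mk (fun a b : B => π a = b) a = x → ¬ (a ∈ P)} := by
    show Nat.card {x : Quot (fun a b : B => D.s0 a = b) //
        ∀ a, Quot.mk (fun a b : B => D.s0 a = b) a = x → a ∉ P} = _
    refine card_quot_isolated_congr (fun a b : B => D.s0 a = b) (fun a b : B => π a = b)
      (fun a => a ∈ P) ?_ ?_
    · intro a ha b
      rw [eqvGen_perm_iff, eqvGen_perm_iff]
      have hdis : ∀ n : ℕ, (D.s0 ^ n) a ∉ P := by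
        intro n
        exact ha ((D.s0 ^ n) a) ((eqvGen_perm_iff D.s0 a _).2 ⟨n, rfl⟩)
      have hpow : ∀ n : ℕ, (π ^ n) a = (D.s0 ^ n) a := by
        intro n
        induction n with
        | zero => rfl
        | succ n ih =>
          rw [pow_succ_apply, pow_succ_apply, ih]
          exact hfix _ (hdis n)
      constructor
      · rintro ⟨n, rfl⟩; exact ⟨n, hpow n⟩
      · rintro ⟨n, rfl⟩; exact ⟨n, (hpow n).symm⟩
    · intro a ha b
      rw [eqvGen_perm_iff, eqvGen_perm_iff]
      have hdis : ∀ n : ℕ, (π ^ n) a ∉ P := by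
        intro n
        exact ha ((π ^ n) a) ((eqvGen_perm_iff π a _).2 ⟨n, rfl⟩)
      have hpow : ∀ n : ℕ, (π ^ n) a = (D.s0 ^ n) a := by
        intro n
        induction n with
        | zero => rfl
        | succ n ih =>
          rw [pow_succ_apply, pow_succ_apply, ← ih]
          exact hfix _ (hdis n)
      constructor
      · rintro ⟨n, rfl⟩; exact ⟨n, (hpow n).symm⟩
      · rintro ⟨n, rfl⟩; exact ⟨n, hpow n⟩
  rw [hstep1, card_quot_firstRet π P, hiso]
  rw [show cyc π = Nat.card (Quot (fun a b : B => π a = b)) from rfl]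
  exact (card_quot_split (fun a b : B => π a = b) (fun a => a ∈ P)).symm

lemma mem_act_edges (x : B) : x ∈ (D.toRG.spanning D.toRG.edges).act := by
  rw [act_spanning D (le_refl _)]
  refine (mem_biUnion_iff _ x).2 ⟨D.toRG.edgeOf x, Finset.mem_image.2 ⟨x, Finset.mem_univ x, rfl⟩, ?_⟩
  show x ∈ ({x, D.s1 x} : Finset B)
  simp

lemma piS_edges : piS D D.toRG.edges = D.s0 * D.s1 := by
  refine Equiv.ext fun x => ?_
  show piS D _ x = D.s0 (D.s1 x)
  exact piS_apply_mem D _ x (mem_act_edges D x)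

lemma s2_eq : D.s2 = (D.s0 * D.s1)⁻¹ := by
  have h : (D.s0 * D.s1) * D.s2 = 1 := by
    refine Equiv.ext fun b => ?_
    show D.s0 (D.s1 (D.s2 b)) = b
    exact D.triple b
  exact (inv_eq_of_mul_eq_one_right h).symm

lemma reach_s2_iff (x y : B) : Reach D.s2 x y ↔ Reach (D.s0 * D.s1) x y := by
  rw [s2_eq]
  exact reach_inv_iff _ x y

lemma fN_eq_cyc : D.fN = cyc (D.s0 * D.s1) := by
  show Nat.card (Quot fun a b : B => D.s2 a = b) = Nat.card (Quot fun a b : B => (D.s0 * D.s1) a = b)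
  refine quot_congr fun x y => ?_
  rw [eqvGen_perm_iff, eqvGen_perm_iff, reach_s2_iff]

lemma edgeOf_mem (a : B) : D.toRG.edgeOf a ∈ D.toRG.edges :=
  Finset.mem_image.2 ⟨a, Finset.mem_univ a, rfl⟩

lemma piS_insert {S : Finset (Finset B)} (hS : S ⊆ D.toRG.edges) (a : B)
    (he : D.toRG.edgeOf a ∉ S) :
    piS D (insert (D.toRG.edgeOf a) S) = piS D S * Equiv.swap a (D.s1 a) := by
  have hS' : insert (D.toRG.edgeOf a) S ⊆ D.toRG.edges :=
    Finset.insert_subset_iff.2 ⟨edgeOf_mem D a, hS⟩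
  have hna : a ∉ S.biUnion id := fun h => he (edge_mem_of_mem_biUnion D hS h)
  have hnb : D.s1 a ∉ S.biUnion id := fun h => by
    have := edge_mem_of_mem_biUnion D hS h
    rw [edgeOf_s1] at this
    exact he this
  have hactS : (D.toRG.spanning S).act = S.biUnion id := act_spanning D hS
  have hact' : (D.toRG.spanning (insert (D.toRG.edgeOf a) S)).act
      = D.toRG.edgeOf a ∪ S.biUnion id := by
    rw [act_spanning D hS', Finset.biUnion_insert]
    rfl
  have htau : tau D (insert (D.toRG.edgeOf a) S) = tau D S * Equiv.swap a (D.s1 a) := by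
    refine Equiv.ext fun x => ?_
    show tauFun D _ x = tau D S (Equiv.swap a (D.s1 a) x)
    by_cases hxa : x = a
    · subst hxa
      rw [tauFun, if_pos, Equiv.swap_apply_left, tau_apply, tauFun, if_neg]
      · rw [hactS]; exact hnb
      · rw [hact']
        refine Finset.mem_union_left _ ?_
        show x ∈ ({x, D.s1 x} : Finset B); simp
    · by_cases hxb : x = D.s1 a
      · subst hxb
        rw [tauFun, if_pos, Equiv.swap_apply_right, tau_apply, tauFun, if_neg, D.invol]
        · rw [hactS]; exact hna
        · rw [hact']
          refine Finset.mem_union_left _ ?_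
          show D.s1 a ∈ ({a, D.s1 a} : Finset B); simp
      · have hswap : Equiv.swap a (D.s1 a) x = x := Equiv.swap_apply_of_ne_of_ne hxa hxb
        rw [hswap]
        show tauFun D (insert (D.toRG.edgeOf a) S) x = tauFun D S x
        unfold tauFun
        have hmem_iff : x ∈ (D.toRG.spanning (insert (D.toRG.edgeOf a) S)).act
            ↔ x ∈ (D.toRG.spanning S).act := by
          rw [hact', hactS, Finset.mem_union]
          constructor
          · rintro (h | h)
            · exfalso
              have h2 : x = a ∨ x = D.s1 a := by
                simp only [RG.edgeOf, Finset.mem_insert, Finset.mem_singleton] at h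
                exact h
              rcases h2 with rfl | rfl
              · exact hxa rfl
              · exact hxb rfl
            · exact h
          · intro h; exact Or.inr h
        by_cases hx : x ∈ (D.toRG.spanning S).act
        · rw [if_pos (hmem_iff.2 hx), if_pos hx]
        · rw [if_neg (fun hc => hx (hmem_iff.1 hc)), if_neg hx]
  show D.s0 * tau D (insert (D.toRG.edgeOf a) S) = (D.s0 * tau D S) * Equiv.swap a (D.s1 a)
  rw [htau, mul_assoc]

lemma cyc_toggle {S : Finset (Finset B)} (hS : S ⊆ D.toRG.edges) (a : B)
    (he : D.toRG.edgeOf a ∉ S) :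
    (Reach (piS D S) a (D.s1 a) ∧
      cyc (piS D (insert (D.toRG.edgeOf a) S)) = cyc (piS D S) + 1) ∨
    (Reach (piS D (insert (D.toRG.edgeOf a) S)) a (D.s1 a) ∧
      cyc (piS D (insert (D.toRG.edgeOf a) S)) + 1 = cyc (piS D S)) := by
  have hab : a ≠ D.s1 a := fun h => D.fpf a h.symm
  rw [piS_insert D hS a he]
  by_cases h : Reach (piS D S) a (D.s1 a)
  · exact Or.inl ⟨h, cyc_mul_swap_of_reach _ hab h⟩
  · obtain ⟨h1, h2⟩ := cyc_mul_swap_of_not_reach (piS D S) h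
    exact Or.inr ⟨h1, h2⟩

lemma cyc_le_of_subset : ∀ (k : ℕ) (S : Finset (Finset B)), S ⊆ D.toRG.edges →
    D.toRG.edges.card ≤ S.card + k →
    (cyc (piS D S) : ℤ) ≤ cyc (piS D D.toRG.edges) + ((D.toRG.edges.card : ℤ) - S.card) := by
  intro k
  induction k with
  | zero =>
    intro S hsub hcard
    have hSE : S = D.toRG.edges := Finset.eq_of_subset_of_card_le hsub (by omega)
    subst hSE
    simp
  | succ k ih =>
    intro S hsub hcard
    by_cases hSe : S = D.toRG.edges
    · subst hSe
      simp
    · obtain ⟨e, hem, hnot⟩ := Finset.exists_of_ssubset (lt_of_le_of_ne hsub hSe)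
      obtain ⟨x, -, rfl⟩ := Finset.mem_image.1 hem
      have hsub' : insert (D.toRG.edgeOf x) S ⊆ D.toRG.edges :=
        Finset.insert_subset_iff.2 ⟨hem, hsub⟩
      have hcardins : (insert (D.toRG.edgeOf x) S).card = S.card + 1 :=
        Finset.card_insert_of_notMem hnot
      have ih' := ih (insert (D.toRG.edgeOf x) S) hsub' (by omega)
      rw [hcardins] at ih'
      have hSle : S.card ≤ D.toRG.edges.card := Finset.card_le_card hsub
      push_cast at ih' ⊢
      rcases cyc_toggle D hsub x hnot with ⟨-, h⟩ | ⟨-, h⟩ <;> omega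

lemma cyc_lt_of_ssubset
    (hyp : ∀ x : B, ¬ Reach (piS D D.toRG.edges) x (D.s1 x)) :
    ∀ (k : ℕ) (S : Finset (Finset B)), S ⊆ D.toRG.edges → S ≠ D.toRG.edges →
    D.toRG.edges.card ≤ S.card + k →
    (cyc (piS D S) : ℤ) ≤ cyc (piS D D.toRG.edges) + ((D.toRG.edges.card : ℤ) - S.card) - 2 := by
  intro k
  induction k with
  | zero =>
    intro S hsub hne hcard
    exact absurd (Finset.eq_of_subset_of_card_le hsub (by omega)) hne
  | succ k ih =>
    intro S hsub hne hcard
    obtain ⟨e, hem, hnot⟩ := Finset.exists_of_ssubset (lt_of_le_of_ne hsub hne)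
    obtain ⟨x, -, rfl⟩ := Finset.mem_image.1 hem
    have hsub' : insert (D.toRG.edgeOf x) S ⊆ D.toRG.edges :=
      Finset.insert_subset_iff.2 ⟨hem, hsub⟩
    have hcardins : (insert (D.toRG.edgeOf x) S).card = S.card + 1 :=
      Finset.card_insert_of_notMem hnot
    have hSle : S.card ≤ D.toRG.edges.card := Finset.card_le_card hsub
    by_cases hfull : insert (D.toRG.edgeOf x) S = D.toRG.edges
    · have hEcard : D.toRG.edges.card = S.card + 1 := by rw [← hfull, hcardins]
      rcases cyc_toggle D hsub x hnot with ⟨-, h⟩ | ⟨hr, -⟩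
      · rw [hfull] at h
        push_cast
        omega
      · rw [hfull] at hr
        exact absurd hr (hyp x)
    · have ih' := ih (insert (D.toRG.edgeOf x) S) hsub' hfull (by omega)
      rw [hcardins] at ih'
      push_cast at ih' ⊢
      rcases cyc_toggle D hsub x hnot with ⟨-, h⟩ | ⟨-, h⟩ <;> omega

lemma T_mul_apply (m : ℤ) (f : LaurentPolynomial ℤ) (d : ℤ) :
    ((LaurentPolynomial.T m : LaurentPolynomial ℤ) * f).coeff d = f.coeff (d - m) := by
  have h := AddMonoidAlgebra.coeff_single_mul_apply f (1 : ℤ) m d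
  have h2 : LaurentPolynomial.T m = AddMonoidAlgebra.single m (1 : ℤ) := rfl
  rw [h2, h, one_mul, neg_add_eq_sub]

lemma mul_T_apply (f : LaurentPolynomial ℤ) (m d : ℤ) :
    (f * (LaurentPolynomial.T m : LaurentPolynomial ℤ)).coeff d = f.coeff (d - m) := by
  have h := AddMonoidAlgebra.coeff_mul_single_apply f (1 : ℤ) m d
  have h2 : LaurentPolynomial.T m = AddMonoidAlgebra.single m (1 : ℤ) := rfl
  rw [h2, h, mul_one, sub_eq_add_neg]

lemma lDelta_pow (n : ℕ) :
    (∀ d : ℤ, (RG.lDelta ^ n).coeff d ≠ 0 → -2 * (n : ℤ) ≤ d) ∧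
      (RG.lDelta ^ n).coeff (-2 * (n : ℤ)) = (-1) ^ n := by
  induction n with
  | zero =>
    constructor
    · intro d hd
      by_contra hcon
      push_neg at hcon
      have hd0 : d ≠ 0 := by omega
      apply hd
      show (1 : LaurentPolynomial ℤ).coeff d = 0
      rw [← LaurentPolynomial.T_zero]
      show (Finsupp.single (0:ℤ) (1:ℤ)) d = 0
      rw [Finsupp.single_apply, if_neg (fun h => hd0 h.symm)]
    · show (1 : LaurentPolynomial ℤ).coeff (-2 * ((0:ℕ):ℤ)) = 1
      rw [← LaurentPolynomial.T_zero]
      show (Finsupp.single (0:ℤ) (1:ℤ)) (-2 * ((0:ℕ):ℤ)) = 1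
      rw [Finsupp.single_apply]
      norm_num
  | succ n ih =>
    have hmul : ∀ d : ℤ, (RG.lDelta ^ (n + 1)).coeff d
        = -((RG.lDelta ^ n).coeff (d - 2)) - (RG.lDelta ^ n).coeff (d + 2) := by
      intro d
      rw [pow_succ]
      rw [show RG.lDelta = -LaurentPolynomial.T 2 - LaurentPolynomial.T (-2) from rfl]
      rw [mul_sub, mul_neg, AddMonoidAlgebra.coeff_sub, Finsupp.sub_apply,
        AddMonoidAlgebra.coeff_neg, Finsupp.neg_apply, mul_T_apply, mul_T_apply,
        sub_neg_eq_add]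
    constructor
    · intro d hd
      rw [hmul d] at hd
      by_cases h1 : (RG.lDelta ^ n).coeff (d - 2) = 0
      · have h2 : (RG.lDelta ^ n).coeff (d + 2) ≠ 0 := by
          intro h
          rw [h1, h] at hd
          simp at hd
        have := ih.1 _ h2
        push_cast
        omega
      · have := ih.1 _ h1
        push_cast
        omega
    · rw [hmul]
      have h1 : (-2 * ((n:ℤ) + 1) - 2) = (-2 * n) - 4 := by ring
      have h2 : (-2 * ((n:ℤ) + 1) + 2) = -2 * n := by ring
      push_cast
      rw [h1, h2, ih.2]
      have h3 : (RG.lDelta ^ n).coeff (-2 * (n:ℤ) - 4) = 0 := by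
        by_contra h
        have := ih.1 _ h
        omega
      rw [h3]
      ring


end BMin

/-- For a connected ribbon graph, every exponent of `A` occurring in `⟨𝔻⟩`
is at least `2 − e(𝔻) − 2f(𝔻)`; if no edge `{a, b}` has `a` and `b` in the same
`σ₂`-orbit (the B-adequate case, i.e. the dual has no loops), the coefficient of
`A^{2 − e(𝔻) − 2f(𝔻)}` is nonzero, so the minimal exponent equals `2 − e(𝔻) − 2f(𝔻)`. -/
theorem bracket_min_exponent [Nonempty B] (D : RibbonGraph B) (hc : D.Connected) :
    (∀ d ∈ D.toRG.bracket.coeff.support, 2 - (D.toRG.numE : ℤ) - 2 * D.fN ≤ d) ∧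
    ((∀ a : B, ¬ D.s2.SameCycle a (D.s1 a)) →
      (2 - (D.toRG.numE : ℤ) - 2 * D.fN) ∈ D.toRG.bracket.coeff.support) := by
  classical
  have hQn : ∀ σ : Equiv.Perm B, Nonempty (Quot (fun a b : B => σ a = b)) :=
    fun σ => ⟨Quot.mk _ (Classical.arbitrary B)⟩
  have hcyc_pos : ∀ σ : Equiv.Perm B, 1 ≤ BMin.cyc σ := by
    intro σ
    have := hQn σ
    exact Nat.card_pos
  have hcycE : BMin.cyc (BMin.piS D D.toRG.edges) = D.fN := by
    rw [BMin.piS_edges, ← BMin.fN_eq_cyc]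
  have hF : ∀ S : Finset (Finset B), S ⊆ D.toRG.edges →
      (D.toRG.spanning S).numF = BMin.cyc (BMin.piS D S) := fun S hS => BMin.numF_eq_cyc D hS
  have hF1 : ∀ S : Finset (Finset B), S ⊆ D.toRG.edges →
      1 ≤ (D.toRG.spanning S).numF := by
    intro S hS
    rw [hF S hS]
    exact hcyc_pos _
  have hfN1 : 1 ≤ D.fN := by
    rw [BMin.fN_eq_cyc]
    exact hcyc_pos _
  have hbound : ∀ S : Finset (Finset B), S ⊆ D.toRG.edges →
      ((D.toRG.spanning S).numF : ℤ) ≤ D.fN + ((D.toRG.edges.card : ℤ) - S.card) := by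
    intro S hS
    rw [hF S hS, ← hcycE]
    exact BMin.cyc_le_of_subset D D.toRG.edges.card S hS (by omega)
  have hnumE : D.toRG.numE = D.toRG.edges.card := rfl
  have hsum : ∀ d : ℤ, D.toRG.bracket.coeff d = ∑ S ∈ D.toRG.edges.powerset,
      ((LaurentPolynomial.T ((D.toRG.numE : ℤ) - 2 * S.card) : LaurentPolynomial ℤ)
        * RG.lDelta ^ ((D.toRG.spanning S).numF - 1)).coeff d := by
    intro d
    rw [RG.bracket, AddMonoidAlgebra.coeff_sum]
    exact Finsupp.finset_sum_apply _ _ _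
  constructor
  · intro d hd
    rw [Finsupp.mem_support_iff, hsum d] at hd
    obtain ⟨S, hSp, hne⟩ := Finset.exists_ne_zero_of_sum_ne_zero hd
    have hS : S ⊆ D.toRG.edges := Finset.mem_powerset.1 hSp
    rw [BMin.T_mul_apply] at hne
    have h1 := (BMin.lDelta_pow ((D.toRG.spanning S).numF - 1)).1 _ hne
    have h2 := hbound S hS
    have h3 := hF1 S hS
    have h4 : (((D.toRG.spanning S).numF - 1 : ℕ) : ℤ) = ((D.toRG.spanning S).numF : ℤ) - 1 := by
      omega
    rw [h4] at h1
    have h5 : S.card ≤ D.toRG.edges.card := Finset.card_le_card hS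
    rw [hnumE] at *
    omega
  · intro hadq
    have hyp : ∀ x : B, ¬ BMin.Reach (BMin.piS D D.toRG.edges) x (D.s1 x) := by
      intro x hr
      rw [BMin.piS_edges] at hr
      obtain ⟨n, hn⟩ := (BMin.reach_s2_iff D x (D.s1 x)).2 hr
      exact hadq x ⟨(n : ℤ), by rw [zpow_natCast]; exact hn⟩
    rw [Finsupp.mem_support_iff, hsum]
    rw [Finset.sum_eq_single D.toRG.edges]
    · rw [BMin.T_mul_apply]
      have hFE : (D.toRG.spanning D.toRG.edges).numF = D.fN := by
        rw [hF _ (le_refl _), hcycE]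
      rw [hFE, hnumE]
      have harg : 2 - (D.toRG.edges.card : ℤ) - 2 * D.fN -
          ((D.toRG.edges.card : ℤ) - 2 * D.toRG.edges.card) = -2 * ((D.fN - 1 : ℕ) : ℤ) := by
        have : ((D.fN - 1 : ℕ) : ℤ) = (D.fN : ℤ) - 1 := by omega
        rw [this]
        ring
      rw [harg, (BMin.lDelta_pow (D.fN - 1)).2]
      exact pow_ne_zero _ (by norm_num)
    · intro S hSp hne
      have hS : S ⊆ D.toRG.edges := Finset.mem_powerset.1 hSp
      have hstrict : ((D.toRG.spanning S).numF : ℤ)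
          ≤ D.fN + ((D.toRG.edges.card : ℤ) - S.card) - 2 := by
        rw [hF S hS, ← hcycE]
        exact BMin.cyc_lt_of_ssubset D hyp D.toRG.edges.card S hS hne (by omega)
      rw [BMin.T_mul_apply]
      by_contra h
      have h1 := (BMin.lDelta_pow ((D.toRG.spanning S).numF - 1)).1 _ h
      have h3 := hF1 S hS
      have h4 : (((D.toRG.spanning S).numF - 1 : ℕ) : ℤ) = ((D.toRG.spanning S).numF : ℤ) - 1 := by
        omega
      rw [h4] at h1
      have h5 : S.card ≤ D.toRG.edges.card := Finset.card_le_card hS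
      rw [hnumE] at h1
      omega
    · intro h
      exact absurd (Finset.mem_powerset_self _) h
end

section
/- Let 𝔻 = (σ₀, σ₁, σ₂) be an oriented ribbon graph and let 𝔻* = (σ₂⁻¹, σ₁, σ₀⁻¹) be its dual. Then ⟨𝔻*⟩ is obtained from ⟨𝔻⟩ by the substitution A ↦ A⁻¹; that is, the ring automorphism of ℤ[A, A⁻¹] sending A to A⁻¹ maps ⟨𝔻⟩ to ⟨𝔻*⟩. (This is the combinatorial form of the fact that the all-B ribbon graph of a link projection is the all-A ribbon graph of its mirror image, and that the Kauffman bracket of the mirror image is obtained by inverting A.) -/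
open Equiv Finset

variable {B : Type} [Fintype B] [DecidableEq B]

namespace BDAux

lemma apply_inv_self' (f : Perm B) (x : B) : f (f⁻¹ x) = x := f.apply_symm_apply x

def pr (f : Perm B) : B → B → Prop := fun a b => f a = b

lemma mk_pow (f : Perm B) (a : B) (n : ℕ) :
    Quot.mk (pr f) ((f ^ n) a) = Quot.mk (pr f) a := by
  induction n with
  | zero => rfl
  | succ k ih =>
    rw [← ih]
    exact (Quot.sound (show pr f ((f ^ k) a) ((f ^ (k + 1)) a) by
      simp [pr, pow_succ', Perm.mul_apply])).symm

lemma exists_pow_rev (f : Perm B) {a b : B} (n : ℕ) (h : (f ^ n) a = b) :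
    ∃ m : ℕ, (f ^ m) b = a := by
  refine ⟨orderOf f * n - n, ?_⟩
  have hle : n ≤ orderOf f * n := Nat.le_mul_of_pos_left n (orderOf_pos f)
  rw [← h, ← Perm.mul_apply, ← pow_add, Nat.sub_add_cancel hle, pow_mul,
    pow_orderOf_eq_one, one_pow, Perm.one_apply]

lemma mk_eq_iff (f : Perm B) {a b : B} :
    Quot.mk (pr f) a = Quot.mk (pr f) b ↔ ∃ n : ℕ, (f ^ n) a = b := by
  constructor
  · intro h
    have h' := Quot.eqvGen_exact h
    clear h
    induction h' with
    | rel x y hxy => exact ⟨1, by simpa [pr] using hxy⟩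
    | refl x => exact ⟨0, rfl⟩
    | symm x y _ ih => obtain ⟨n, hn⟩ := ih; exact exists_pow_rev f n hn
    | trans x y z _ _ ih1 ih2 =>
      obtain ⟨n, hn⟩ := ih1; obtain ⟨m, hm⟩ := ih2
      exact ⟨m + n, by rw [pow_add, Perm.mul_apply, hn, hm]⟩
  · rintro ⟨n, rfl⟩; exact (mk_pow f a n).symm

lemma firstRet_coe (σ : Perm B) (P : Finset B) (b : ↥P)
    (h : ∃ m, 0 < m ∧ (σ ^ m) (b : B) ∈ P) :
    (firstRet σ P b : B) = (σ ^ Nat.find h) (b : B) := rfl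

end BDAux

namespace BDAux

/-- The state permutation `ρ`: `b ↦ π (e b)` on `P`, `b ↦ π b` off `P`. -/
def rho (π e : Perm B) (P : Finset B) (he : ∀ b ∈ P, e b ∈ P)
    (hinv : ∀ b, e (e b) = b) : Perm B :=
  π * Function.Involutive.toPerm (fun b => if b ∈ P then e b else b)
    (by
      intro b
      by_cases hb : b ∈ P
      · simp [hb, he b hb, hinv]
      · simp [hb])

lemma rho_apply_mem {π e : Perm B} {P : Finset B} {he} {hinv} {b : B} (hb : b ∈ P) :
    rho π e P he hinv b = π (e b) := by
  simp [rho, Perm.mul_apply, Function.Involutive.coe_toPerm, hb]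
  exact if_pos hb

lemma rho_apply_not_mem {π e : Perm B} {P : Finset B} {he} {hinv} {b : B} (hb : b ∉ P) :
    rho π e P he hinv b = π b := by
  simp [rho, Perm.mul_apply, Function.Involutive.coe_toPerm, hb]
  exact if_neg hb

section Main

variable (π e : Perm B) (P : Finset B) (he : ∀ b ∈ P, e b ∈ P) (hinv : ∀ b, e (e b) = b)

/-- iterating ρ from a point of `P` follows `π` applied to `e a` while outside `P`. -/
lemma rho_pow_eq (a : B) (ha : a ∈ P) :
    ∀ k, 0 < k → (∀ j, 0 < j → j < k → (π ^ j) (e a) ∉ P) →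
      ((rho π e P he hinv) ^ k) a = (π ^ k) (e a) := by
  intro k
  induction k with
  | zero => intro h; exact absurd h (lt_irrefl 0)
  | succ m ih =>
    intro _ hout
    rcases Nat.eq_zero_or_pos m with rfl | hm
    · simpa [pow_one] using rho_apply_mem ha
    · have h1 : ((rho π e P he hinv) ^ m) a = (π ^ m) (e a) :=
        ih hm (fun j hj hjm => hout j hj (hjm.trans (Nat.lt_succ_self m)))
      have h2 : (π ^ m) (e a) ∉ P := hout m hm (Nat.lt_succ_self m)
      rw [pow_succ', Perm.mul_apply, h1, rho_apply_not_mem h2,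
        ← Perm.mul_apply, ← pow_succ']

/-- the first return of ρ to P from `a ∈ P` is `firstRet π P (e a)`,
with no intermediate visits to `P`. -/
lemma rho_firstRet (a : ↥P) :
    ∃ n, 0 < n ∧ ((rho π e P he hinv) ^ n) (a : B) = (firstRet π P ⟨e a, he _ a.2⟩ : B) ∧
      ∀ j, 0 < j → j < n → ((rho π e P he hinv) ^ j) (a : B) ∉ P := by
  have h : ∃ m, 0 < m ∧ (π ^ m) ((⟨e a, he _ a.2⟩ : ↥P) : B) ∈ P :=
    ⟨orderOf π, orderOf_pos π, by rw [pow_orderOf_eq_one]; simpa using (he _ a.2)⟩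
  refine ⟨Nat.find h, (Nat.find_spec h).1, ?_, ?_⟩
  · rw [firstRet_coe π P _ h]
    exact rho_pow_eq π e P he hinv a a.2 _ (Nat.find_spec h).1
      (fun j hj hjn => fun hmem => Nat.find_min h hjn ⟨hj, hmem⟩)
  · intro j hj hjn
    rw [rho_pow_eq π e P he hinv a a.2 j hj
      (fun i hi hij => fun hmem => Nat.find_min h (hij.trans hjn) ⟨hi, hmem⟩)]
    exact fun hmem => Nat.find_min h hjn ⟨hj, hmem⟩

/-- off `P`-orbits, ρ agrees with π. -/
lemma rho_pow_eq_of_pi (a : B) (h : ∀ k : ℕ, (π ^ k) a ∉ P) :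
    ∀ n : ℕ, ((rho π e P he hinv) ^ n) a = (π ^ n) a := by
  intro n
  induction n with
  | zero => rfl
  | succ m ih =>
    rw [pow_succ', Perm.mul_apply, ih, rho_apply_not_mem (h m), ← Perm.mul_apply,
      ← pow_succ']

lemma rho_pow_eq_of_rho (a : B) (h : ∀ k : ℕ, ((rho π e P he hinv) ^ k) a ∉ P) :
    ∀ n : ℕ, ((rho π e P he hinv) ^ n) a = (π ^ n) a := by
  intro n
  induction n with
  | zero => rfl
  | succ m ih =>
    rw [pow_succ', Perm.mul_apply, rho_apply_not_mem (ih ▸ h m), ih, ← Perm.mul_apply,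
      ← pow_succ']

end Main

end BDAux

namespace BDAux

variable (π e : Perm B) (P : Finset B) (he : ∀ b ∈ P, e b ∈ P) (hinv : ∀ b, e (e b) = b)

/-- restricted to `P`, ρ-equivalence is generated by the face relation. -/
lemma mk_face_of_rho_pow :
    ∀ n : ℕ, ∀ a b : ↥P, ((rho π e P he hinv) ^ n) (a : B) = (b : B) →
      Quot.mk (fun a b : ↥P => firstRet π P ⟨e a, he _ a.2⟩ = b) a =
      Quot.mk (fun a b : ↥P => firstRet π P ⟨e a, he _ a.2⟩ = b) b := by
  intro n
  induction n using Nat.strong_induction_on with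
  | _ n IH =>
    intro a b hab
    rcases Nat.eq_zero_or_pos n with rfl | hn
    · have : a = b := Subtype.ext (by simpa using hab)
      rw [this]
    · obtain ⟨m, hm0, hmret, hmmin⟩ := rho_firstRet π e P he hinv a
      have hmn : m ≤ n := by
        by_contra hcon
        exact hmmin n hn (lt_of_not_ge hcon) (hab ▸ b.2)
      set c : ↥P := firstRet π P ⟨e a, he _ a.2⟩ with hc
      have step : Quot.mk (fun a b : ↥P => firstRet π P ⟨e a, he _ a.2⟩ = b) a =
          Quot.mk (fun a b : ↥P => firstRet π P ⟨e a, he _ a.2⟩ = b) c :=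
        Quot.sound rfl
      have hrest : ((rho π e P he hinv) ^ (n - m)) (c : B) = (b : B) := by
        rw [← hmret, ← Perm.mul_apply, ← pow_add, Nat.sub_add_cancel hmn]
        exact hab
      exact step.trans (IH (n - m) (Nat.sub_lt hn hm0) c b hrest)

end BDAux

namespace BDAux

theorem main (π e : Perm B) (P : Finset B) (he : ∀ b ∈ P, e b ∈ P)
    (hinv : ∀ b, e (e b) = b) :
    orbCount (fun a b : ↥P => firstRet π P ⟨e a, he _ a.2⟩ = b)
      + Nat.card {x : Quot (fun a b : B => π a = b) // ∀ a : B, Quot.mk _ a = x → a ∉ P}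
      = orbCount (pr (rho π e P he hinv)) := by
  classical
  set f := rho π e P he hinv with hf
  set rF : ↥P → ↥P → Prop := fun a b => firstRet π P ⟨e a, he _ a.2⟩ = b with hrF
  -- the lift on the face-orbit part is well-defined
  have hQF : ∀ a b : ↥P, rF a b → Quot.mk (pr f) (a : B) = Quot.mk (pr f) (b : B) := by
    intro a b hab
    obtain ⟨n, hn0, hret, -⟩ := rho_firstRet π e P he hinv a
    exact (mk_eq_iff f).2 ⟨n, by rw [hret, hab]⟩
  -- isolated π-classes have all π- and ρ-iterates outside P
  have hiso : ∀ (q : Quot (pr π)), (∀ a : B, Quot.mk (pr π) a = q → a ∉ P) →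
      ∀ k : ℕ, (π ^ k) q.out ∉ P := by
    intro q hq k
    exact hq _ ((mk_pow π q.out k).trans q.out_eq)
  set D : Type := {x : Quot (pr π) // ∀ a : B, Quot.mk (pr π) a = x → a ∉ P} with hD
  let Φ : Quot rF ⊕ D → Quot (pr f) :=
    Sum.elim (Quot.lift (fun a : ↥P => Quot.mk (pr f) (a : B)) hQF)
      (fun x => Quot.mk (pr f) x.1.out)
  have hbij : Function.Bijective Φ := by
    constructor
    · rintro (x | x) (y | y) hxy
      · revert hxy
        induction x using Quot.ind with | _ a =>
        induction y using Quot.ind with | _ b =>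
        intro hxy
        obtain ⟨n, hn⟩ := (mk_eq_iff f).1 hxy
        exact congrArg Sum.inl (mk_face_of_rho_pow π e P he hinv n a b hn)
      · exfalso
        revert hxy
        induction x using Quot.ind with | _ a =>
        intro hxy
        obtain ⟨n, hn⟩ := (mk_eq_iff f).1 (hxy.symm : Quot.mk (pr f) y.1.out = _)
        rw [rho_pow_eq_of_pi π e P he hinv _ (hiso y.1 y.2) n] at hn
        exact hn ▸ (hiso y.1 y.2 n) <| a.2
      · exfalso
        revert hxy
        induction y using Quot.ind with | _ a =>
        intro hxy
        obtain ⟨n, hn⟩ := (mk_eq_iff f).1 (hxy : Quot.mk (pr f) x.1.out = _)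
        rw [rho_pow_eq_of_pi π e P he hinv _ (hiso x.1 x.2) n] at hn
        exact hn ▸ (hiso x.1 x.2 n) <| a.2
      · obtain ⟨n, hn⟩ := (mk_eq_iff f).1 (hxy : Quot.mk (pr f) x.1.out = _)
        rw [rho_pow_eq_of_pi π e P he hinv _ (hiso x.1 x.2) n] at hn
        have : Quot.mk (pr π) x.1.out = Quot.mk (pr π) y.1.out :=
          (mk_eq_iff π).2 ⟨n, hn⟩
        have : x.1 = y.1 := by rw [← x.1.out_eq, ← y.1.out_eq]; exact this
        exact congrArg Sum.inr (Subtype.ext this)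
    · intro y
      induction y using Quot.ind with | _ c =>
      by_cases hc : ∀ b : B, Quot.mk (pr f) b = Quot.mk (pr f) c → b ∉ P
      · -- the ρ-class of c misses P
        have hck : ∀ k : ℕ, (f ^ k) c ∉ P := fun k => hc _ (mk_pow f c k)
        have hpk : ∀ k : ℕ, (π ^ k) c ∉ P := fun k =>
          (rho_pow_eq_of_rho π e P he hinv c hck k) ▸ hck k
        have hq : ∀ a : B, Quot.mk (pr π) a = Quot.mk (pr π) c → a ∉ P := by
          intro a ha
          obtain ⟨m, hm⟩ := exists_pow_rev π _ ((mk_eq_iff π).1 ha).choose_spec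
          exact hm ▸ hpk m
        refine ⟨Sum.inr ⟨Quot.mk (pr π) c, hq⟩, ?_⟩
        show Quot.mk (pr f) (Quot.mk (pr π) c).out = Quot.mk (pr f) c
        have ho : Quot.mk (pr π) (Quot.mk (pr π) c).out = Quot.mk (pr π) c :=
          Quot.out_eq _
        obtain ⟨n, hn⟩ := (mk_eq_iff π).1 ho
        have houtk : ∀ k : ℕ, (π ^ k) (Quot.mk (pr π) c).out ∉ P := fun k =>
          hq _ ((mk_pow π _ k).trans ho)
        exact (mk_eq_iff f).2 ⟨n, by
          rw [rho_pow_eq_of_pi π e P he hinv _ houtk n]; exact hn⟩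
      · push_neg at hc
        obtain ⟨b, hb1, hb2⟩ := hc
        exact ⟨Sum.inl (Quot.mk rF ⟨b, hb2⟩), hb1⟩
  haveI : Finite (Quot rF) := Finite.of_surjective _ (Quot.mk_surjective (r := rF))
  haveI : Finite (Quot (pr π)) := Finite.of_surjective _ (Quot.mk_surjective (r := pr π))
  have hcard := Nat.card_eq_of_bijective Φ hbij
  rw [Nat.card_sum] at hcard
  exact hcard

end BDAux


namespace BDAux

open RG

/-- `numF` of any `RG` in terms of the state permutation ρ. -/
lemma numF_eq (G : RG B) :
    G.numF = orbCount (pr (rho G.s0 G.s1 G.act G.closed G.invol)) :=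
  main G.s0 G.s1 G.act G.closed G.invol

/-- The dual ribbon graph. -/
def dualRG (D : RibbonGraph B) : RibbonGraph B where
  s0 := D.s2⁻¹
  s1 := D.s1
  s2 := D.s0⁻¹
  invol := D.invol
  fpf := D.fpf
  triple := by
    intro b
    have h2 : ∀ x, D.s2⁻¹ x = D.s0 (D.s1 x) := by
      intro x
      have h := D.triple (D.s2⁻¹ x)
      rw [apply_inv_self'] at h; exact h.symm
    rw [h2, D.invol, apply_inv_self']

lemma edgeOf_s1 (G : RG B) (b : B) : G.edgeOf (G.s1 b) = G.edgeOf b := by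
  unfold RG.edgeOf
  rw [G.invol, Finset.pair_comm]

lemma mem_edgeOf_self (G : RG B) (b : B) : b ∈ G.edgeOf b :=
  Finset.mem_insert_self _ _

lemma mem_biUnion_edges (G : RG B) {S : Finset (Finset B)} (hS : S ⊆ G.edges) (b : B) :
    b ∈ S.biUnion id ↔ G.edgeOf b ∈ S := by
  constructor
  · intro h
    obtain ⟨E, hE, hbe⟩ := Finset.mem_biUnion.1 h
    obtain ⟨a, -, rfl⟩ := Finset.mem_image.1 (hS hE)
    simp only [id] at hbe
    rcases Finset.mem_insert.1 hbe with rfl | hbe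
    · exact hE
    · rw [Finset.mem_singleton] at hbe
      subst hbe
      rwa [edgeOf_s1]
  · intro h
    exact Finset.mem_biUnion.2 ⟨_, h, mem_edgeOf_self G b⟩

lemma mem_spanning_act (G : RG B) (hact : G.act = Finset.univ) {S : Finset (Finset B)}
    (hS : S ⊆ G.edges) (b : B) :
    b ∈ (G.spanning S).act ↔ G.edgeOf b ∈ S := by
  show b ∈ G.act.filter _ ↔ _
  rw [Finset.mem_filter, hact]
  simp only [Finset.mem_univ, true_and]
  rw [mem_biUnion_edges G hS, mem_biUnion_edges G hS, edgeOf_s1, and_self]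

lemma edgeOf_mem_edges (G : RG B) (hact : G.act = Finset.univ) (b : B) :
    G.edgeOf b ∈ G.edges :=
  Finset.mem_image_of_mem _ (by rw [hact]; exact Finset.mem_univ b)

/-- The key combinatorial fact: the faces of `H_S` in `𝔻` and of `H_{Sᶜ}` in `𝔻*`
are counted by the same state permutation. -/
lemma numF_spanning_dual (D : RibbonGraph B) (S : Finset (Finset B))
    (hS : S ⊆ D.toRG.edges) :
    (D.toRG.spanning S).numF
      = ((dualRG D).toRG.spanning (D.toRG.edges \ S)).numF := by
  have hact1 : D.toRG.act = Finset.univ := rfl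
  have hact2 : (dualRG D).toRG.act = Finset.univ := rfl
  have hedges : (dualRG D).toRG.edges = D.toRG.edges := rfl
  set G1 := D.toRG.spanning S with hG1
  set G2 := (dualRG D).toRG.spanning (D.toRG.edges \ S) with hG2
  rw [numF_eq G1, numF_eq G2]
  have hrho : rho G1.s0 G1.s1 G1.act G1.closed G1.invol
      = rho G2.s0 G2.s1 G2.act G2.closed G2.invol := by
    apply Equiv.ext
    intro b
    have hmem1 : b ∈ G1.act ↔ D.toRG.edgeOf b ∈ S := mem_spanning_act _ hact1 hS b
    have hmem2 : b ∈ G2.act ↔ D.toRG.edgeOf b ∉ S := by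
      rw [hG2, mem_spanning_act _ hact2 (S := D.toRG.edges \ S)
        (fun x hx => (Finset.mem_sdiff.1 hx).1) b, Finset.mem_sdiff]
      have : (dualRG D).toRG.edgeOf b = D.toRG.edgeOf b := rfl
      rw [this]
      simp [edgeOf_mem_edges D.toRG hact1 b]
    have hdual : ∀ x, D.s2⁻¹ x = D.s0 (D.s1 x) := by
      intro x
      have h := D.triple (D.s2⁻¹ x)
      rw [apply_inv_self'] at h; exact h.symm
    have hs0_1 : G1.s0 = D.s0 := rfl
    have hs1_1 : G1.s1 = D.s1 := rfl
    have hs0_2 : G2.s0 = D.s2⁻¹ := rfl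
    have hs1_2 : G2.s1 = D.s1 := rfl
    by_cases hb : D.toRG.edgeOf b ∈ S
    · rw [rho_apply_mem (hmem1.2 hb), rho_apply_not_mem (fun h => (hmem2.1 h) hb)]
      rw [hs0_1, hs1_1, hs0_2, hdual]
    · rw [rho_apply_not_mem (fun h => hb (hmem1.1 h)), rho_apply_mem (hmem2.2 hb)]
      rw [hs0_1, hs0_2, hs1_2, hdual, D.invol]
  rw [hrho]

lemma invert_lDelta :
    LaurentPolynomial.invert (RG.lDelta : LaurentPolynomial ℤ) = RG.lDelta := by
  unfold RG.lDelta
  rw [map_sub, map_neg, LaurentPolynomial.invert_T, LaurentPolynomial.invert_T]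
  ring

end BDAux


/-- The dual triple `𝔻* = (σ₂⁻¹, σ₁, σ₀⁻¹)` is again an oriented ribbon
graph, and its bracket is obtained from `⟨𝔻⟩` by the ring automorphism of `ℤ[A, A⁻¹]`
sending `A` to `A⁻¹` (mirror image). -/
theorem bracket_dual (D : RibbonGraph B) :
    ∃ Ds : RibbonGraph B,
      Ds.s0 = D.s2⁻¹ ∧ Ds.s1 = D.s1 ∧ Ds.s2 = D.s0⁻¹ ∧
      LaurentPolynomial.invert D.toRG.bracket = Ds.toRG.bracket := by
  classical
  refine ⟨BDAux.dualRG D, rfl, rfl, rfl, ?_⟩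
  unfold RG.bracket
  rw [map_sum]
  refine Finset.sum_nbij' (fun S => D.toRG.edges \ S) (fun S => D.toRG.edges \ S)
    ?_ ?_ ?_ ?_ ?_
  · intro S hS
    exact Finset.mem_powerset.2 Finset.sdiff_subset
  · intro S hS
    exact Finset.mem_powerset.2 Finset.sdiff_subset
  · intro S hS
    exact Finset.sdiff_sdiff_eq_self (Finset.mem_powerset.1 hS)
  · intro S hS
    exact Finset.sdiff_sdiff_eq_self (Finset.mem_powerset.1 hS)
  · intro S hS
    have hsub : S ⊆ D.toRG.edges := Finset.mem_powerset.1 hS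
    rw [map_mul, map_pow, LaurentPolynomial.invert_T, BDAux.invert_lDelta]
    beta_reduce
    rw [BDAux.numF_spanning_dual D S hsub]
    congr 2
    have hc : S.card ≤ D.toRG.edges.card := Finset.card_le_card hsub
    show -((D.toRG.edges.card : ℤ) - 2 * S.card)
      = (D.toRG.edges.card : ℤ) - 2 * (D.toRG.edges \ S).card
    rw [Finset.card_sdiff_of_subset hsub]
    omega
end
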